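/- arXiv:2312.14450 — 8 statements merged into one kernel-verified Lean document; each statement's English description precedes it below -/
import Mathlib

section
/- Let k ≥ 3 and n a nonzero integer. Let a, b, c, d be positive integers with a < b, c < d, and ac ≥ 2|n|. If ac + n, bc + n, ad + n, and bd + n are all k-th powers of positive integers, then bd ≥ k^k · (ac)^(k-1) / (4^(k-1) · |n|^k). -/
private lemma pow_succ_lower (u : ℕ) : ∀ k : ℕ, 1 ≤ k → u ^ k + k * u ^ (k - 1) ≤ (u + 1) ^ k := by
  intro k
  induction k with
  | zero => omega
  | succ k ih =>
    intro _
    rcases Nat.eq_zero_or_pos k with hk0 | hk1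
    · subst hk0; simp
    · have h := ih hk1
      have h2 : (u ^ k + k * u ^ (k - 1)) * (u + 1) ≤ (u + 1) ^ k * (u + 1) :=
        Nat.mul_le_mul_right _ h
      have hpow : u ^ (k - 1) * u = u ^ k := by
        rw [← pow_succ]; congr 1; omega
      have expand : (u ^ k + k * u ^ (k - 1)) * (u + 1)
          = u ^ k * u + u ^ k + k * u ^ k + k * u ^ (k - 1) := by
        rw [← hpow]; ring
      have hsplit : (k + 1) * u ^ k = k * u ^ k + u ^ k := by ring
      calc u ^ (k + 1) + (k + 1) * u ^ k
          ≤ (u ^ k + k * u ^ (k - 1)) * (u + 1) := by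
            rw [pow_succ, expand, hsplit]; omega
        _ ≤ (u + 1) ^ k * (u + 1) := h2
        _ = (u + 1) ^ (k + 1) := (pow_succ _ _).symm

private lemma gap_lemma (k u v : ℕ) (hk : 1 ≤ k) (huv : u < v) :
    (k : ℤ) * (u : ℤ) ^ (k - 1) ≤ (v : ℤ) ^ k - (u : ℤ) ^ k := by
  have h1 := pow_succ_lower u k hk
  have h2 : (u + 1) ^ k ≤ v ^ k := Nat.pow_le_pow_left huv k
  have h3 : u ^ k + k * u ^ (k - 1) ≤ v ^ k := le_trans h1 h2
  have h4 : ((u : ℤ)) ^ k + (k : ℤ) * (u : ℤ) ^ (k - 1) ≤ (v : ℤ) ^ k := by exact_mod_cast h3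
  linarith

/-- Gap principle: if `a < b`, `c < d`, `ac ≥ 2|n|` and the four shifted products
`ac+n, bc+n, ad+n, bd+n` are all k-th powers of positive integers, then
`bd ≥ k^k (ac)^(k-1) / (4^(k-1) |n|^k)`. -/
theorem stmt0 (k : ℕ) (hk : 3 ≤ k) (n : ℤ) (hn : n ≠ 0)
    (a b c d : ℕ) (ha : 0 < a) (hc : 0 < c)
    (hab : a < b) (hcd : c < d)
    (hac : 2 * |n| ≤ (a * c : ℤ))
    (h1 : ∃ x : ℕ, 0 < x ∧ (a * c : ℤ) + n = (x : ℤ) ^ k)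
    (h2 : ∃ x : ℕ, 0 < x ∧ (b * c : ℤ) + n = (x : ℤ) ^ k)
    (h3 : ∃ x : ℕ, 0 < x ∧ (a * d : ℤ) + n = (x : ℤ) ^ k)
    (h4 : ∃ x : ℕ, 0 < x ∧ (b * d : ℤ) + n = (x : ℤ) ^ k) :
    (k : ℝ) ^ k * ((a : ℝ) * c) ^ (k - 1) / (4 ^ (k - 1) * ((|n| : ℤ) : ℝ) ^ k)
      ≤ (b : ℝ) * d := by
  obtain ⟨x1, hx1, e1⟩ := h1
  obtain ⟨x2, hx2, e2⟩ := h2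
  obtain ⟨x3, hx3, e3⟩ := h3
  obtain ⟨x4, hx4, e4⟩ := h4
  have hN0 : (0 : ℤ) < |n| := abs_pos.mpr hn
  have hk1 : 1 ≤ k := by omega
  have hab' : (a : ℤ) ≤ b := by exact_mod_cast hab.le
  have hcd' : (c : ℤ) ≤ d := by exact_mod_cast hcd.le
  have ha0 : (0 : ℤ) < a := by exact_mod_cast ha
  have hc0 : (0 : ℤ) < c := by exact_mod_cast hc
  have hb0 : (0 : ℤ) < b := by exact_mod_cast ha.trans hab
  have hd0 : (0 : ℤ) < d := by exact_mod_cast hc.trans hcd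
  have hbd_ac : (a : ℤ) * c ≤ (b : ℤ) * d := mul_le_mul hab' hcd' hc0.le hb0.le
  have hbc_ac : (a : ℤ) * c ≤ (b : ℤ) * c := by nlinarith
  have had_ac : (a : ℤ) * c ≤ (a : ℤ) * d := by nlinarith
  have hnlb := neg_abs_le n
  -- key identity
  have hkey : ((x1 * x4 : ℕ) : ℤ) ^ k - ((x2 * x3 : ℕ) : ℤ) ^ k
      = n * ((b : ℤ) - a) * ((d : ℤ) - c) := by
    push_cast [mul_pow]
    rw [← e1, ← e4, ← e2, ← e3]; ring
  have hrhs_ne : n * ((b : ℤ) - a) * ((d : ℤ) - c) ≠ 0 := by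
    apply mul_ne_zero (mul_ne_zero hn _)
    · intro h; have : (c : ℤ) < d := by exact_mod_cast hcd
      linarith [sub_eq_zero.mp h]
    · intro h; have : (a : ℤ) < b := by exact_mod_cast hab
      linarith [sub_eq_zero.mp h]
  have hne : x1 * x4 ≠ x2 * x3 := by
    intro h; rw [h, sub_self] at hkey; exact hrhs_ne hkey.symm
  -- bound on the RHS
  have habs : |n * ((b : ℤ) - a) * ((d : ℤ) - c)| ≤ |n| * b * d := by
    rw [abs_mul, abs_mul]
    have hb1 : |(b : ℤ) - a| ≤ b := by
      rw [abs_of_nonneg (by linarith)]; linarith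
    have hd1 : |(d : ℤ) - c| ≤ d := by
      rw [abs_of_nonneg (by linarith)]; linarith
    have : |n| * |(b : ℤ) - a| ≤ |n| * b := mul_le_mul_of_nonneg_left hb1 (abs_nonneg n)
    calc |n| * |(b : ℤ) - a| * |(d : ℤ) - c| ≤ |n| * (b : ℤ) * |(d : ℤ) - c| :=
          mul_le_mul_of_nonneg_right this (abs_nonneg _)
      _ ≤ |n| * b * d := mul_le_mul_of_nonneg_left hd1 (by positivity)
  -- lower bounds 4 * u^k, 4 * v^k ≥ ac * bd
  have hu4 : (a : ℤ) * c * ((b : ℤ) * d) ≤ 4 * ((x1 * x4 : ℕ) : ℤ) ^ k := by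
    push_cast [mul_pow]
    rw [← e1, ← e4]
    have hA : (a : ℤ) * c ≤ 2 * ((a : ℤ) * c + n) := by linarith
    have hB : (b : ℤ) * d ≤ 2 * ((b : ℤ) * d + n) := by linarith
    have hA0 : (0 : ℤ) ≤ (a : ℤ) * c := by positivity
    have hB0 : (0 : ℤ) ≤ (b : ℤ) * d := by positivity
    calc (a : ℤ) * c * ((b : ℤ) * d)
        ≤ (2 * ((a : ℤ) * c + n)) * (2 * ((b : ℤ) * d + n)) :=
          mul_le_mul hA hB hB0 (le_trans hA0 hA)
      _ = 4 * (((a : ℤ) * c + n) * ((b : ℤ) * d + n)) := by ring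
  have hv4 : (a : ℤ) * c * ((b : ℤ) * d) ≤ 4 * ((x2 * x3 : ℕ) : ℤ) ^ k := by
    push_cast [mul_pow]
    rw [← e2, ← e3]
    have hA : (b : ℤ) * c ≤ 2 * ((b : ℤ) * c + n) := by linarith
    have hB : (a : ℤ) * d ≤ 2 * ((a : ℤ) * d + n) := by linarith
    have hA0 : (0 : ℤ) ≤ (b : ℤ) * c := by positivity
    have hB0 : (0 : ℤ) ≤ (a : ℤ) * d := by positivity
    calc (a : ℤ) * c * ((b : ℤ) * d)
        = (b : ℤ) * c * ((a : ℤ) * d) := by ring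
      _ ≤ (2 * ((b : ℤ) * c + n)) * (2 * ((a : ℤ) * d + n)) :=
          mul_le_mul hA hB hB0 (le_trans hA0 hA)
      _ = 4 * (((b : ℤ) * c + n) * ((a : ℤ) * d + n)) := by ring
  -- combine: ∃ m with both properties
  obtain ⟨m, hm_gap, hm4⟩ : ∃ m : ℕ, (k : ℤ) * (m : ℤ) ^ (k - 1) ≤ |n| * b * d ∧
      (a : ℤ) * c * ((b : ℤ) * d) ≤ 4 * (m : ℤ) ^ k := by
    rcases lt_or_gt_of_ne hne with h | h
    · refine ⟨x1 * x4, ?_, hu4⟩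
      have hg := gap_lemma k (x1 * x4) (x2 * x3) hk1 h
      have : ((x2 * x3 : ℕ) : ℤ) ^ k - ((x1 * x4 : ℕ) : ℤ) ^ k
          ≤ |n * ((b : ℤ) - a) * ((d : ℤ) - c)| := by
        rw [← hkey]; rw [show ((x2*x3:ℕ):ℤ)^k - ((x1*x4:ℕ):ℤ)^k
          = -(((x1*x4:ℕ):ℤ)^k - ((x2*x3:ℕ):ℤ)^k) by ring]
        exact neg_le_abs _
      linarith
    · refine ⟨x2 * x3, ?_, hv4⟩
      have hg := gap_lemma k (x2 * x3) (x1 * x4) hk1 h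
      have : ((x1 * x4 : ℕ) : ℤ) ^ k - ((x2 * x3 : ℕ) : ℤ) ^ k
          ≤ |n * ((b : ℤ) - a) * ((d : ℤ) - c)| := by
        rw [← hkey]; exact le_abs_self _
      linarith
  -- raise to powers
  have hm0 : (0 : ℤ) ≤ (m : ℤ) := Int.natCast_nonneg m
  have step1 : ((k : ℤ) * (m : ℤ) ^ (k - 1)) ^ k ≤ (|n| * b * d) ^ k :=
    pow_le_pow_left₀ (by positivity) hm_gap k
  have step2 : ((a : ℤ) * c * ((b : ℤ) * d)) ^ (k - 1) ≤ (4 * (m : ℤ) ^ k) ^ (k - 1) :=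
    pow_le_pow_left₀ (by positivity) hm4 (k - 1)
  have epow : ((m : ℤ) ^ (k - 1)) ^ k = ((m : ℤ) ^ k) ^ (k - 1) := by
    rw [← pow_mul, ← pow_mul, Nat.mul_comm]
  have main : (k : ℤ) ^ k * ((a : ℤ) * c) ^ (k - 1) * ((b : ℤ) * d) ^ (k - 1)
      ≤ 4 ^ (k - 1) * |n| ^ k * ((b : ℤ) * d) ^ (k - 1) * ((b : ℤ) * d) := by
    have c1 : (k : ℤ) ^ k * ((a : ℤ) * c) ^ (k - 1) * ((b : ℤ) * d) ^ (k - 1)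
        = (k : ℤ) ^ k * ((a : ℤ) * c * ((b : ℤ) * d)) ^ (k - 1) := by
      rw [mul_pow]; ring
    have c2 : (k : ℤ) ^ k * ((a : ℤ) * c * ((b : ℤ) * d)) ^ (k - 1)
        ≤ (k : ℤ) ^ k * (4 * (m : ℤ) ^ k) ^ (k - 1) :=
      mul_le_mul_of_nonneg_left step2 (by positivity)
    have c3 : (k : ℤ) ^ k * (4 * (m : ℤ) ^ k) ^ (k - 1)
        = 4 ^ (k - 1) * ((k : ℤ) * (m : ℤ) ^ (k - 1)) ^ k := by
      rw [mul_pow, mul_pow, epow]; ring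
    have c4 : 4 ^ (k - 1) * ((k : ℤ) * (m : ℤ) ^ (k - 1)) ^ k
        ≤ 4 ^ (k - 1) * (|n| * b * d) ^ k :=
      mul_le_mul_of_nonneg_left step1 (by positivity)
    have c5 : (4 : ℤ) ^ (k - 1) * (|n| * b * d) ^ k
        = 4 ^ (k - 1) * |n| ^ k * ((b : ℤ) * d) ^ (k - 1) * ((b : ℤ) * d) := by
      have hkk : k = (k - 1) + 1 := by omega
      have hbdk : ((b : ℤ) * d) ^ k = ((b : ℤ) * d) ^ (k - 1) * ((b : ℤ) * d) := by
        conv_lhs => rw [hkk]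
        rw [pow_succ]
      rw [show |n| * (b : ℤ) * d = |n| * ((b : ℤ) * d) by ring, mul_pow, hbdk]
      ring
    linarith [c1 ▸ (c2.trans (c3 ▸ c4)), c5]
  have hbd_pos : (0 : ℤ) < (b : ℤ) * d := by positivity
  have final : (k : ℤ) ^ k * ((a : ℤ) * c) ^ (k - 1) ≤ 4 ^ (k - 1) * |n| ^ k * ((b : ℤ) * d) := by
    have hp : (0 : ℤ) < ((b : ℤ) * d) ^ (k - 1) := pow_pos hbd_pos _
    apply le_of_mul_le_mul_right _ hp
    calc (k : ℤ) ^ k * ((a : ℤ) * c) ^ (k - 1) * ((b : ℤ) * d) ^ (k - 1)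
        ≤ 4 ^ (k - 1) * |n| ^ k * ((b : ℤ) * d) ^ (k - 1) * ((b : ℤ) * d) := main
      _ = 4 ^ (k - 1) * |n| ^ k * ((b : ℤ) * d) * ((b : ℤ) * d) ^ (k - 1) := by ring
  -- transfer to ℝ
  have finalR : (k : ℝ) ^ k * ((a : ℝ) * c) ^ (k - 1)
      ≤ 4 ^ (k - 1) * ((|n| : ℤ) : ℝ) ^ k * ((b : ℝ) * d) := by exact_mod_cast final
  have hNR : (0 : ℝ) < ((|n| : ℤ) : ℝ) := by exact_mod_cast hN0
  rw [div_le_iff₀ (by positivity)]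
  calc (k : ℝ) ^ k * ((a : ℝ) * c) ^ (k - 1)
      ≤ 4 ^ (k - 1) * ((|n| : ℤ) : ℝ) ^ k * ((b : ℝ) * d) := finalR
    _ = (b : ℝ) * d * (4 ^ (k - 1) * ((|n| : ℤ) : ℝ) ^ k) := by ring
end

section
/- Let k ≥ 3 and n a positive integer. Let a, b, c, d be positive integers with a < b, c < d. If ac + n, bc + n, ad + n, bd + n are all k-th powers of positive integers, then n·(b·d) ≥ k·(a·b·c·d)^((k-1)/k). -/
lemma aux_pow (t : ℕ) : ∀ k : ℕ, 1 ≤ k → t ^ k + k * t ^ (k - 1) ≤ (t + 1) ^ k := by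
  intro k
  induction k with
  | zero => intro h; omega
  | succ m ih =>
    intro _
    rcases Nat.eq_zero_or_pos m with h | hm
    · subst h; simp
    · have h2 : (t ^ m + m * t ^ (m - 1)) * (t + 1) ≤ (t + 1) ^ m * (t + 1) :=
        Nat.mul_le_mul_right _ (ih hm)
      have h3 : t ^ (m - 1) * t = t ^ m := by
        rw [← pow_succ]; congr 1; omega
      have expand : (t ^ m + m * t ^ (m - 1)) * (t + 1)
          = t ^ (m + 1) + (m + 1) * t ^ m + m * t ^ (m - 1) := by
        calc (t ^ m + m * t ^ (m - 1)) * (t + 1)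
            = t ^ m * t + t ^ m + m * (t ^ (m - 1) * t) + m * t ^ (m - 1) := by ring
          _ = t ^ (m + 1) + (m + 1) * t ^ m + m * t ^ (m - 1) := by
              rw [h3, ← pow_succ]; ring
      calc t ^ (m + 1) + (m + 1) * t ^ (m + 1 - 1)
          = t ^ (m + 1) + (m + 1) * t ^ m := by norm_num
        _ ≤ t ^ (m + 1) + (m + 1) * t ^ m + m * t ^ (m - 1) := Nat.le_add_right _ _
        _ = (t ^ m + m * t ^ (m - 1)) * (t + 1) := expand.symm
        _ ≤ (t + 1) ^ m * (t + 1) := h2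
        _ = (t + 1) ^ (m + 1) := by ring

set_option maxHeartbeats 800000 in
/-- For positive `n`: if `a < b`, `c < d` and the four shifted products are k-th powers,
then `n·(bd) ≥ k·(abcd)^((k-1)/k)`. -/
theorem stmt1 (k : ℕ) (hk : 3 ≤ k) (n : ℤ) (hn : 0 < n)
    (a b c d : ℕ) (ha : 0 < a) (hc : 0 < c)
    (hab : a < b) (hcd : c < d)
    (h1 : ∃ x : ℕ, 0 < x ∧ (a * c : ℤ) + n = (x : ℤ) ^ k)
    (h2 : ∃ x : ℕ, 0 < x ∧ (b * c : ℤ) + n = (x : ℤ) ^ k)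
    (h3 : ∃ x : ℕ, 0 < x ∧ (a * d : ℤ) + n = (x : ℤ) ^ k)
    (h4 : ∃ x : ℕ, 0 < x ∧ (b * d : ℤ) + n = (x : ℤ) ^ k) :
    (k : ℝ) * ((a : ℝ) * b * c * d) ^ (((k : ℝ) - 1) / k) ≤ (n : ℝ) * ((b : ℝ) * d) := by
  obtain ⟨x, hx, hx1⟩ := h1
  obtain ⟨y, hy, hy1⟩ := h2
  obtain ⟨z, hz, hz1⟩ := h3
  obtain ⟨w, hw, hw1⟩ := h4
  -- key integer identity
  have hdiff : ((x * w : ℕ) : ℤ) ^ k - ((z * y : ℕ) : ℤ) ^ k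
      = n * ((b : ℤ) - a) * ((d : ℤ) - c) := by
    push_cast
    rw [mul_pow, mul_pow, ← hx1, ← hw1, ← hz1, ← hy1]
    ring
  have hba : (0 : ℤ) < (b : ℤ) - a := by
    have : (a : ℤ) < b := by exact_mod_cast hab
    linarith
  have hdc : (0 : ℤ) < (d : ℤ) - c := by
    have : (c : ℤ) < d := by exact_mod_cast hcd
    linarith
  have hpos : (0 : ℤ) < ((x * w : ℕ) : ℤ) ^ k - ((z * y : ℕ) : ℤ) ^ k := by
    rw [hdiff]; positivity
  have hlt : z * y < x * w := by
    have hpk : ((z * y : ℕ) : ℤ) ^ k < ((x * w : ℕ) : ℤ) ^ k := by linarith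
    by_contra hcon
    push_neg at hcon
    have : ((x * w : ℕ) : ℤ) ^ k ≤ ((z * y : ℕ) : ℤ) ^ k := by
      apply pow_le_pow_left₀ (by positivity) (by exact_mod_cast hcon)
    linarith
  have hstep : (z * y) ^ k + k * (z * y) ^ (k - 1) ≤ (x * w) ^ k := by
    calc (z * y) ^ k + k * (z * y) ^ (k - 1) ≤ (z * y + 1) ^ k := aux_pow (z * y) k (by omega)
      _ ≤ (x * w) ^ k := Nat.pow_le_pow_left (by omega) k
  have hstepZ : (k : ℤ) * ((z * y : ℕ) : ℤ) ^ (k - 1) ≤ n * ((b : ℤ) - a) * ((d : ℤ) - c) := by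
    have h' : ((z * y : ℕ) : ℤ) ^ k + (k : ℤ) * ((z * y : ℕ) : ℤ) ^ (k - 1)
        ≤ ((x * w : ℕ) : ℤ) ^ k := by exact_mod_cast hstep
    linarith
  have hbd : n * ((b : ℤ) - a) * ((d : ℤ) - c) ≤ n * ((b : ℤ) * d) := by
    have h1 : ((b : ℤ) - a) * ((d : ℤ) - c) ≤ (b : ℤ) * d := by
      have hca : (0:ℤ) ≤ (a:ℤ) := by positivity
      have hcc : (0:ℤ) ≤ (c:ℤ) := by positivity
      have hb0 : (0:ℤ) ≤ (b:ℤ) := by positivity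
      have hd0 : (0:ℤ) ≤ (d:ℤ) := by positivity
      nlinarith
    calc n * ((b : ℤ) - a) * ((d : ℤ) - c) = n * (((b : ℤ) - a) * ((d : ℤ) - c)) := by ring
      _ ≤ n * ((b : ℤ) * d) := mul_le_mul_of_nonneg_left h1 hn.le
  have hkey : (k : ℤ) * ((z * y : ℕ) : ℤ) ^ (k - 1) ≤ n * ((b : ℤ) * d) :=
    le_trans hstepZ hbd
  -- abcd ≤ (zy)^k
  have habcd : (a * b * c * d : ℤ) ≤ ((z * y : ℕ) : ℤ) ^ k := by
    have heq : ((z * y : ℕ) : ℤ) ^ k = ((a : ℤ) * d + n) * ((b : ℤ) * c + n) := by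
      push_cast
      rw [mul_pow, ← hz1, ← hy1]
    rw [heq]
    have had : (0:ℤ) < (a:ℤ) * d := by
      have hd : (0:ℤ) < (d:ℤ) := by exact_mod_cast Nat.lt_of_lt_of_le hc hcd.le
      have ha' : (0:ℤ) < (a:ℤ) := by exact_mod_cast ha
      exact mul_pos ha' hd
    have hbc : (0:ℤ) < (b:ℤ) * c := by
      have hb : (0:ℤ) < (b:ℤ) := by exact_mod_cast Nat.lt_of_lt_of_le ha hab.le
      have hc' : (0:ℤ) < (c:ℤ) := by exact_mod_cast hc
      exact mul_pos hb hc'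
    nlinarith
  -- now to reals
  have hk0 : (0 : ℝ) < (k : ℝ) := by positivity
  have hMnn : (0 : ℝ) ≤ ((z * y : ℕ) : ℝ) := by positivity
  have habcdnn : (0 : ℝ) ≤ (a : ℝ) * b * c * d := by positivity
  have hle : ((a : ℝ) * b * c * d) ^ (((k : ℝ) - 1) / k)
      ≤ ((z * y : ℕ) : ℝ) ^ (k - 1 : ℕ) := by
    have h1 : ((a : ℝ) * b * c * d) ^ (((k : ℝ) - 1) / k)
        ≤ (((z * y : ℕ) : ℝ) ^ (k : ℕ)) ^ (((k : ℝ) - 1) / k) := by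
      have hexp : (0:ℝ) ≤ ((k : ℝ) - 1) / k := by
        apply div_nonneg _ hk0.le
        have : (3:ℝ) ≤ (k:ℝ) := by exact_mod_cast hk
        linarith
      apply Real.rpow_le_rpow habcdnn _ hexp
      exact_mod_cast habcd
    have h2 : (((z * y : ℕ) : ℝ) ^ (k : ℕ)) ^ (((k : ℝ) - 1) / k)
        = ((z * y : ℕ) : ℝ) ^ (k - 1 : ℕ) := by
      rw [← Real.rpow_natCast ((z * y : ℕ) : ℝ) k, ← Real.rpow_mul hMnn]
      have he : (k : ℝ) * (((k : ℝ) - 1) / k) = ((k - 1 : ℕ) : ℝ) := by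
        have h1k : ((k - 1 : ℕ) : ℝ) = (k : ℝ) - 1 := by
          have : 1 ≤ k := by omega
          push_cast [this]; ring
        rw [h1k]; field_simp
      rw [he, Real.rpow_natCast]
    rw [← h2]; exact h1
  have hkeyR : (k : ℝ) * ((z * y : ℕ) : ℝ) ^ (k - 1 : ℕ) ≤ (n : ℝ) * ((b : ℝ) * d) := by
    exact_mod_cast hkey
  calc (k : ℝ) * ((a : ℝ) * b * c * d) ^ (((k : ℝ) - 1) / k)
      ≤ (k : ℝ) * ((z * y : ℕ) : ℝ) ^ (k - 1 : ℕ) :=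
        mul_le_mul_of_nonneg_left hle hk0.le
    _ ≤ (n : ℝ) * ((b : ℝ) * d) := hkeyR
end

section
/- Let k ≥ 3, n a nonzero integer, and L a real number with L > k/(k-2). Let A = {a₁, a₂} and B = {b₁ < b₂ < ... < b_m} be sets of positive integers with a₁ < a₂ such that ab + n is a k-th power for every a ∈ A and b ∈ B. If a₁^(k-1) ≥ a₂ and b₁ ≥ max(|n|^L, 2|n|), then b_i ≥ b₁^(θ^(i-1)) for every 1 ≤ i ≤ m, where θ = k − 1 − k/L > 1. -/
lemma aux1 (Y : ℤ) (hY : 0 ≤ Y) : ∀ k : ℕ, ((k:ℤ)+1)*Y^k + Y^(k+1) ≤ (Y+1)^(k+1) := by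
  intro k
  induction k with
  | zero => simp [pow_succ]; linarith
  | succ k ih =>
    have h := mul_le_mul_of_nonneg_right ih (by linarith : (0:ℤ) ≤ Y+1)
    have h1 : (0:ℤ) ≤ Y^k := pow_nonneg hY k
    have hk0 : (0:ℤ) ≤ (k:ℤ) := by positivity
    push_cast
    calc ((k:ℤ)+1+1)*Y^(k+1) + Y^(k+1+1)
        ≤ (((k:ℤ)+1)*Y^k + Y^(k+1)) * (Y+1) := by
          rw [pow_succ, pow_succ, pow_succ]
          nlinarith [mul_nonneg h1 hY, mul_nonneg hk0 h1]
      _ ≤ (Y+1)^(k+1) * (Y+1) := h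
      _ = (Y+1)^(k+1+1) := by ring

lemma aux2 (k : ℕ) (hk : 1 ≤ k) (X Y : ℤ) (hY : 0 ≤ Y) (h : Y < X) :
    (k:ℤ) * Y^(k-1) ≤ X^k - Y^k := by
  obtain ⟨j, rfl⟩ := Nat.exists_eq_add_of_le hk
  have h1 := aux1 Y hY j
  have h2 : (Y+1)^(j+1) ≤ X^(j+1) := pow_le_pow_left₀ (by linarith) (by linarith) _
  have e1 : (1+j:ℕ) - 1 = j := by omega
  have e2 : (1+j:ℕ) = (j+1:ℕ) := by omega
  rw [e1, e2]
  push_cast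
  linarith

lemma aux3 (k : ℕ) (hk : 3 ≤ k) : (4:ℤ)^(k-1) ≤ (k:ℤ)^k := by
  induction k, hk using Nat.le_induction with
  | base => norm_num
  | succ k hk ih =>
    have e : k + 1 - 1 = (k-1) + 1 := by omega
    rw [e, pow_succ]
    have h1 : ((k:ℤ))^k ≤ ((k:ℤ)+1)^k := pow_le_pow_left₀ (by positivity) (by linarith) _
    have h2 : (4:ℤ) ≤ (k:ℤ)+1 := by exact_mod_cast by omega
    have h3 : (0:ℤ) ≤ (k:ℤ)^k := by positivity
    calc (4:ℤ)^(k-1) * 4 ≤ (k:ℤ)^k * 4 := by nlinarith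
      _ ≤ ((k:ℤ)+1)^k * ((k:ℤ)+1) := by nlinarith [pow_nonneg (by linarith : (0:ℤ) ≤ (k:ℤ)+1) k]
      _ = ((k:ℤ)+1)^(k+1) := by ring
      _ = ((k+1:ℕ):ℤ)^(k+1) := by push_cast; ring

lemma gap' (k : ℕ) (hk : 3 ≤ k) (n : ℤ) (hn : n ≠ 0) (a₁ a₂ b d : ℤ)
    (ha₁ : 0 < a₁) (ha : a₁ < a₂) (hpow : a₂ ≤ a₁^(k-1)) (hb : 0 < b) (hbd : b < d)
    (hnb : 2*|n| ≤ b)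
    (x₁ x₂ y₁ y₂ : ℤ) (hx₁p : 0 < x₁) (hx₂p : 0 < x₂) (hy₁p : 0 < y₁) (hy₂p : 0 < y₂)
    (e1 : a₁*b+n = x₁^k) (e2 : a₂*b+n = x₂^k) (e3 : a₁*d+n = y₁^k) (e4 : a₂*d+n = y₂^k) :
    b^(k-1) ≤ |n|^k * d := by
  have hk1 : 1 ≤ k := by omega
  have hd : 0 < d := lt_trans hb hbd
  have pa : 0 < a₂ := lt_trans ha₁ ha
  have habsn : (1:ℤ) ≤ |n| := Int.one_le_abs (by omega)
  set X := x₁*y₂ with hX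
  set Y := x₂*y₁ with hY
  have hXp : 0 < X := mul_pos hx₁p hy₂p
  have hYp : 0 < Y := mul_pos hx₂p hy₁p
  have hXk : X^k = (a₁*b+n)*(a₂*d+n) := by rw [hX, mul_pow, ← e1, ← e4]
  have hYk : Y^k = (a₂*b+n)*(a₁*d+n) := by rw [hY, mul_pow, ← e2, ← e3]
  have hdiff : X^k - Y^k = n*((a₂-a₁)*(d-b)) := by rw [hXk, hYk]; ring
  have hne : X ≠ Y := by
    intro hEq
    rw [hEq, sub_self] at hdiff
    have : n*((a₂-a₁)*(d-b)) ≠ 0 := by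
      apply mul_ne_zero hn
      apply mul_ne_zero <;> intro hz <;> omega
    exact this hdiff.symm
  -- upper bound on |X^k - Y^k|
  have hub : |X^k - Y^k| ≤ |n| * (a₂*d) := by
    rw [hdiff, abs_mul]
    have h1 : |(a₂-a₁)*(d-b)| = (a₂-a₁)*(d-b) :=
      abs_of_pos (mul_pos (by omega) (by omega))
    rw [h1]
    have : (a₂-a₁)*(d-b) ≤ a₂*d :=
      mul_le_mul (by omega) (by omega) (by omega) (by omega)
    exact mul_le_mul_of_nonneg_left this (abs_nonneg n)
  -- lower bound |X^k - Y^k| ≥ k * min^(k-1)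
  set M := min X Y with hM
  have hMp : 0 < M := lt_min hXp hYp
  have hstep : (k:ℤ) * M^(k-1) ≤ |X^k - Y^k| := by
    rcases lt_or_gt_of_ne hne with hlt | hgt
    · have hm : M = X := min_eq_left hlt.le
      have : X^k ≤ Y^k := pow_le_pow_left₀ hXp.le hlt.le k
      rw [abs_sub_comm, abs_of_nonneg (by linarith), hm]
      exact aux2 k hk1 Y X hXp.le hlt
    · have hm : M = Y := min_eq_right hgt.le
      have : Y^k ≤ X^k := pow_le_pow_left₀ hYp.le hgt.le k
      rw [abs_of_nonneg (by linarith), hm]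
      exact aux2 k hk1 X Y hYp.le hgt
  have hkey : (k:ℤ) * M^(k-1) ≤ |n| * (a₂*d) := le_trans hstep hub
  -- 4 * M^k ≥ a₁*a₂*(b*d)
  have hnn : -|n| ≤ n := neg_abs_le n
  have g1 : b ≤ a₁*b := le_mul_of_one_le_left hb.le (by omega)
  have g2 : d ≤ a₂*d := le_mul_of_one_le_left hd.le (by omega)
  have g3 : b ≤ a₂*b := le_mul_of_one_le_left hb.le (by omega)
  have g4 : d ≤ a₁*d := le_mul_of_one_le_left hd.le (by omega)
  have f1 : a₁*b ≤ 2*(a₁*b+n) := by linarith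
  have f2 : a₂*d ≤ 2*(a₂*d+n) := by linarith
  have f3 : a₂*b ≤ 2*(a₂*b+n) := by linarith
  have f4 : a₁*d ≤ 2*(a₁*d+n) := by linarith
  have hmin : a₁*a₂*(b*d) ≤ 4*M^k := by
    rcases min_choice X Y with hm | hm
    · rw [hM, hm, hXk]
      calc a₁*a₂*(b*d) = (a₁*b)*(a₂*d) := by ring
        _ ≤ (2*(a₁*b+n))*(2*(a₂*d+n)) :=
            mul_le_mul f1 f2 (mul_pos (lt_trans ha₁ ha) hd).le (by linarith [mul_pos ha₁ hb])
        _ = 4*((a₁*b+n)*(a₂*d+n)) := by ring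
    · rw [hM, hm, hYk]
      calc a₁*a₂*(b*d) = (a₂*b)*(a₁*d) := by ring
        _ ≤ (2*(a₂*b+n))*(2*(a₁*d+n)) :=
            mul_le_mul f3 f4 (mul_pos ha₁ hd).le (by linarith [mul_pos (lt_trans ha₁ ha) hb])
        _ = 4*((a₂*b+n)*(a₁*d+n)) := by ring
  -- raise hkey to k-th power
  have h1 : (k:ℤ)^k * (M^k)^(k-1) ≤ (|n| * (a₂*d))^k := by
    have := pow_le_pow_left₀ (mul_nonneg (by positivity) (pow_nonneg hMp.le _)) hkey k
    calc (k:ℤ)^k * (M^k)^(k-1) = ((k:ℤ) * M^(k-1))^k := by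
          rw [mul_pow, ← pow_mul, ← pow_mul, Nat.mul_comm]
      _ ≤ (|n| * (a₂*d))^k := this
  have h2 : (a₁*a₂*(b*d))^(k-1) ≤ (4*M^k)^(k-1) := pow_le_pow_left₀ (mul_nonneg (mul_nonneg ha₁.le pa.le) (mul_nonneg hb.le hd.le)) hmin _
  -- main chain
  have hch : (4:ℤ)^(k-1) * (a₂^k * (b^(k-1) * d^(k-1))) ≤ 4^(k-1) * (|n|^k * (a₂^k * d^k)) := by
    have hA : a₂^k ≤ (a₁*a₂)^(k-1) := by
      have : a₂^k = a₂ * a₂^(k-1) := by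
        rw [← pow_succ']
        congr 1
        omega
      rw [this, mul_pow]
      exact mul_le_mul hpow le_rfl (pow_nonneg pa.le _) (pow_nonneg ha₁.le _)
    have h4 : (0:ℤ) ≤ (b*d)^(k-1) := pow_nonneg (mul_nonneg hb.le hd.le) _
    calc (4:ℤ)^(k-1) * (a₂^k * (b^(k-1) * d^(k-1)))
        = a₂^k * ((b*d)^(k-1)) * 4^(k-1) := by rw [mul_pow]; ring
      _ ≤ (a₁*a₂)^(k-1) * ((b*d)^(k-1)) * (k:ℤ)^k := by
          apply mul_le_mul (mul_le_mul hA le_rfl h4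
              (pow_nonneg (mul_nonneg ha₁.le pa.le) _)) (aux3 k hk)
            (by positivity)
            (mul_nonneg (pow_nonneg (mul_nonneg ha₁.le pa.le) _) h4)
      _ = (k:ℤ)^k * (a₁*a₂*(b*d))^(k-1) := by rw [mul_pow]; ring
      _ ≤ (k:ℤ)^k * (4*M^k)^(k-1) := by
          apply mul_le_mul_of_nonneg_left h2 (pow_nonneg (by positivity) _)
      _ = 4^(k-1) * ((k:ℤ)^k * (M^k)^(k-1)) := by rw [mul_pow]; ring
      _ ≤ 4^(k-1) * (|n| * (a₂*d))^k := mul_le_mul_of_nonneg_left h1 (by positivity)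
      _ = 4^(k-1) * (|n|^k * (a₂^k * d^k)) := by rw [mul_pow, mul_pow]
  -- cancel
  have hc1 : a₂^k * (b^(k-1) * d^(k-1)) ≤ |n|^k * (a₂^k * d^k) :=
    le_of_mul_le_mul_left hch (by positivity)
  have hc2 : b^(k-1) * d^(k-1) ≤ |n|^k * d^k := by
    have : a₂^k * (b^(k-1) * d^(k-1)) = (b^(k-1) * d^(k-1)) * a₂^k := by ring
    rw [this] at hc1
    have h5 : |n|^k * (a₂^k * d^k) = (|n|^k * d^k) * a₂^k := by ring
    rw [h5] at hc1
    exact le_of_mul_le_mul_right hc1 (pow_pos pa _)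
  have hdk : d^k = d * d^(k-1) := by
    rw [← pow_succ']
    congr 1
    omega
  rw [hdk] at hc2
  have : b^(k-1) * d^(k-1) ≤ (|n|^k * d) * d^(k-1) := by
    calc b^(k-1) * d^(k-1) ≤ |n|^k * (d * d^(k-1)) := hc2
      _ = (|n|^k * d) * d^(k-1) := by ring
  exact le_of_mul_le_mul_right this (pow_pos hd _)

/-- Super-exponential growth of `B` under the gap principle: with `A = {a₁, a₂}`,
`a₁^(k-1) ≥ a₂`, `b₀ ≥ max(|n|^L, 2|n|)` and all `a·bᵢ + n` k-th powers,
one has `bᵢ ≥ b₀^(θ^i)` where `θ = k - 1 - k/L > 1` (0-indexed). -/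
theorem stmt2 (k : ℕ) (hk : 3 ≤ k) (n : ℤ) (hn : n ≠ 0) (L : ℝ)
    (hL : (k : ℝ) / ((k : ℝ) - 2) < L)
    (a₁ a₂ : ℕ) (ha₁ : 0 < a₁) (ha : a₁ < a₂) (hpow : a₂ ≤ a₁ ^ (k - 1))
    (m : ℕ) (hm : 0 < m) (b : ℕ → ℕ)
    (hmono : ∀ i j, i < j → j < m → b i < b j)
    (hbpos : ∀ i, i < m → 0 < b i)
    (hB : ∀ i, i < m →
      (∃ x : ℕ, 0 < x ∧ (a₁ * b i : ℤ) + n = (x : ℤ) ^ k) ∧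
      (∃ x : ℕ, 0 < x ∧ (a₂ * b i : ℤ) + n = (x : ℤ) ^ k))
    (hb1 : max (((|n| : ℤ) : ℝ) ^ L) (2 * ((|n| : ℤ) : ℝ)) ≤ (b 0 : ℝ)) :
    ∀ i, i < m → ((b 0 : ℝ)) ^ (((k : ℝ) - 1 - (k : ℝ) / L) ^ i) ≤ (b i : ℝ) := by
  set θ : ℝ := (k : ℝ) - 1 - (k : ℝ) / L with hθdef
  -- basic facts about L, θ
  have hk2 : (0:ℝ) < (k:ℝ) - 2 := by
    have : (3:ℝ) ≤ (k:ℝ) := by exact_mod_cast hk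
    linarith
  have hkpos : (0:ℝ) < (k:ℝ) := by linarith
  have hL0 : 0 < L := lt_trans (div_pos hkpos hk2) hL
  have hkL : (k:ℝ)/L < (k:ℝ) - 2 := by
    rw [div_lt_iff₀ hL0]
    have := (div_lt_iff₀ hk2).mp hL
    nlinarith
  have hθ1 : 1 < θ := by rw [hθdef]; linarith
  have hθ0 : 0 ≤ θ := by linarith
  -- |n| facts
  have hn1 : (1:ℤ) ≤ |n| := Int.one_le_abs hn
  have hnR1 : (1:ℝ) ≤ ((|n|:ℤ):ℝ) := by exact_mod_cast hn1
  have hb0n : 2 * ((|n|:ℤ):ℝ) ≤ (b 0 : ℝ) := le_trans (le_max_right _ _) hb1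
  have hb0L : ((|n|:ℤ):ℝ) ^ L ≤ (b 0 : ℝ) := le_trans (le_max_left _ _) hb1
  have hb02 : (2:ℝ) ≤ (b 0 : ℝ) := by linarith
  have hb0Z : (2 * |n| : ℤ) ≤ (b 0 : ℤ) := by exact_mod_cast hb0n
  -- monotonicity: b 0 ≤ b i
  have hble : ∀ i, i < m → b 0 ≤ b i := by
    intro i hi
    rcases Nat.eq_zero_or_pos i with rfl | hpos
    · exact le_rfl
    · exact (hmono 0 i hpos hi).le
  -- the key step: for i with i+1 < m, (b i : ℝ)^θ ≤ b (i+1)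
  have hstep : ∀ i, i + 1 < m → ((b i : ℝ)) ^ θ ≤ (b (i+1) : ℝ) := by
    intro i hi1
    have hi : i < m := Nat.lt_of_succ_lt hi1
    obtain ⟨⟨x₁, hx₁p, e1⟩, ⟨x₂, hx₂p, e2⟩⟩ := hB i hi
    obtain ⟨⟨y₁, hy₁p, e3⟩, ⟨y₂, hy₂p, e4⟩⟩ := hB (i+1) hi1
    have hbi : 0 < b i := hbpos i hi
    have hbd : b i < b (i+1) := hmono i (i+1) (Nat.lt_succ_self i) hi1
    have hble_i : (b 0 : ℤ) ≤ (b i : ℤ) := by exact_mod_cast hble i hi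
    have hgap : ((b i : ℤ))^(k-1) ≤ |n|^k * (b (i+1) : ℤ) := by
      apply gap' k hk n hn (a₁ : ℤ) (a₂ : ℤ) (b i : ℤ) (b (i+1) : ℤ)
        (by exact_mod_cast ha₁) (by exact_mod_cast ha)
        (by exact_mod_cast hpow) (by exact_mod_cast hbi)
        (by exact_mod_cast hbd) (by linarith)
        (x₁:ℤ) (x₂:ℤ) (y₁:ℤ) (y₂:ℤ)
        (by exact_mod_cast hx₁p) (by exact_mod_cast hx₂p)
        (by exact_mod_cast hy₁p) (by exact_mod_cast hy₂p)
        (by exact_mod_cast e1) (by exact_mod_cast e2)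
        (by exact_mod_cast e3) (by exact_mod_cast e4)
    -- cast to ℝ
    have hgapR : ((b i : ℝ))^(k-1) ≤ ((|n|:ℤ):ℝ)^k * (b (i+1) : ℝ) := by
      exact_mod_cast hgap
    have hbiR1 : (1:ℝ) ≤ (b i : ℝ) := by
      have := hble i hi
      have : (b 0 : ℝ) ≤ (b i : ℝ) := by exact_mod_cast this
      linarith
    have hbiR0 : (0:ℝ) < (b i : ℝ) := by linarith
    -- |n| ≤ (b i)^(1/L)
    have hnle : ((|n|:ℤ):ℝ) ≤ (b i : ℝ) ^ (1/L) := by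
      have h1 : ((|n|:ℤ):ℝ) ^ L ≤ (b i : ℝ) := by
        calc ((|n|:ℤ):ℝ) ^ L ≤ (b 0 : ℝ) := hb0L
          _ ≤ (b i : ℝ) := by exact_mod_cast hble i hi
      have h2 := Real.rpow_le_rpow (Real.rpow_nonneg (by linarith) L) h1
        (by positivity : (0:ℝ) ≤ 1/L)
      rwa [← Real.rpow_mul (by linarith : (0:ℝ) ≤ ((|n|:ℤ):ℝ)),
        mul_one_div_cancel (ne_of_gt hL0), Real.rpow_one] at h2
    -- |n|^k ≤ (b i)^(k/L)
    have hnk : ((|n|:ℤ):ℝ)^k ≤ (b i : ℝ) ^ ((k:ℝ)/L) := by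
      have h3 := pow_le_pow_left₀ (by linarith : (0:ℝ) ≤ ((|n|:ℤ):ℝ)) hnle k
      rwa [← Real.rpow_natCast ((b i : ℝ) ^ (1/L)) k,
        ← Real.rpow_mul hbiR0.le, show (1/L)*(k:ℝ) = (k:ℝ)/L by ring] at h3
    have hcast : ((k:ℝ) - 1) = ((k-1:ℕ):ℝ) := by
      rw [Nat.cast_sub (by omega)]; norm_num
    calc (b i : ℝ) ^ θ = (b i : ℝ) ^ ((k:ℝ)-1) / (b i : ℝ) ^ ((k:ℝ)/L) := by
          rw [hθdef, ← Real.rpow_sub hbiR0]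
      _ = (b i : ℝ) ^ (k-1:ℕ) / (b i : ℝ) ^ ((k:ℝ)/L) := by
          rw [hcast, Real.rpow_natCast]
      _ ≤ (b (i+1) : ℝ) := by
          rw [div_le_iff₀ (Real.rpow_pos_of_pos hbiR0 _)]
          calc (b i : ℝ) ^ (k-1:ℕ) ≤ ((|n|:ℤ):ℝ)^k * (b (i+1) : ℝ) := hgapR
            _ ≤ (b i : ℝ) ^ ((k:ℝ)/L) * (b (i+1) : ℝ) :=
                mul_le_mul_of_nonneg_right hnk (by positivity)
            _ = (b (i+1) : ℝ) * (b i : ℝ) ^ ((k:ℝ)/L) := by ring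
  -- main induction
  intro i
  induction i with
  | zero => intro _; rw [pow_zero, Real.rpow_one]
  | succ i ih =>
    intro hi1
    have hi : i < m := Nat.lt_of_succ_lt hi1
    have h1 := ih hi
    have h2 := hstep i hi1
    have hb00 : (0:ℝ) ≤ (b 0 : ℝ) := by linarith
    calc (b 0 : ℝ) ^ (θ^(i+1)) = ((b 0 : ℝ) ^ (θ^i)) ^ θ := by
          rw [pow_succ, Real.rpow_mul hb00]
      _ ≤ (b i : ℝ) ^ θ := Real.rpow_le_rpow (Real.rpow_nonneg hb00 _) h1 hθ0
      _ ≤ (b (i+1) : ℝ) := h2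
end

section
/- Let k ≥ 3 and n a nonzero integer. Let a, b, c, d be positive integers with |n|^(k/(k-2)) ≤ a < b < c < d such that the product of any two distinct elements of {a, b, c, d} plus n is a k-th power of a positive integer. Then d > a^(k-1). -/
private lemma helper1 : ∀ (K m : ℕ), m ^ (K+1) + (K+1) * m ^ K ≤ (m+1)^(K+1) := by
  intro K
  induction K with
  | zero => intro m; simp [pow_succ]
  | succ K ih =>
    intro m
    have h := ih m
    calc m^(K+1+1) + (K+1+1)*m^(K+1)
        = m^(K+2) + (K+1)*m^(K+1) + m^(K+1) := by ring
      _ ≤ m^(K+2) + (K+1)*m^(K+1) + (m^(K+1) + (K+1)*m^K) :=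
          Nat.add_le_add_left (Nat.le_add_right _ _) _
      _ = (m^(K+1) + (K+1)*m^K) * (m+1) := by ring
      _ ≤ (m+1)^(K+1) * (m+1) := Nat.mul_le_mul h le_rfl
      _ = (m+1)^(K+1+1) := (pow_succ _ _).symm

private lemma helper2 : ∀ j : ℕ, 4^(j+2) < (j+3)^(j+3) := by
  intro j
  induction j with
  | zero => norm_num
  | succ j ih =>
    calc 4^(j+1+2) = 4 * 4^(j+2) := by ring
      _ < 4 * (j+3)^(j+3) := by linarith
      _ ≤ (j+4) * (j+4)^(j+3) := Nat.mul_le_mul (by omega) (Nat.pow_le_pow_left (by omega) _)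
      _ = (j+4)^(j+4) := by ring

set_option maxHeartbeats 2000000 in
/-- Gap principle for quadruples with property `D_k(n)`: if
`|n|^(k/(k-2)) ≤ a < b < c < d` and all pairwise products plus `n` are k-th powers,
then `d > a^(k-1)`. -/
theorem stmt3 (k : ℕ) (hk : 3 ≤ k) (n : ℤ) (hn : n ≠ 0)
    (a b c d : ℕ)
    (hlow : ((|n| : ℤ) : ℝ) ^ ((k : ℝ) / ((k : ℝ) - 2)) ≤ (a : ℝ))
    (hab : a < b) (hbc : b < c) (hcd : c < d)
    (hD : ∀ u ∈ ({a, b, c, d} : Finset ℕ), ∀ v ∈ ({a, b, c, d} : Finset ℕ), u ≠ v →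
      ∃ x : ℕ, 0 < x ∧ (u * v : ℤ) + n = (x : ℤ) ^ k) :
    a ^ (k - 1) < d := by
  obtain ⟨j, rfl⟩ : ∃ j, k = j + 3 := ⟨k - 3, by omega⟩
  by_contra hcon0
  push_neg at hcon0
  have hcon : d ≤ a ^ (j+2) := hcon0
  -- Real analysis extraction
  have hxabs : (1:ℤ) ≤ |n| := Int.one_le_abs hn
  have hx1 : (1:ℝ) ≤ ((|n| : ℤ) : ℝ) := by exact_mod_cast hxabs
  have hx0 : (0:ℝ) ≤ ((|n| : ℤ) : ℝ) := by linarith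
  have hs : (0:ℝ) < ((j+3:ℕ):ℝ) - 2 := by
    have : (0:ℝ) ≤ (j:ℝ) := Nat.cast_nonneg j
    push_cast
    linarith
  have he1 : (1:ℝ) ≤ ((j+3:ℕ):ℝ) / (((j+3:ℕ):ℝ) - 2) := by
    rw [le_div_iff₀ hs]
    have : (0:ℝ) ≤ (j:ℝ) := Nat.cast_nonneg j
    push_cast
    linarith
  have hna : |n| ≤ (a:ℤ) := by
    have h := Real.rpow_le_rpow_of_exponent_le hx1 he1
    rw [Real.rpow_one] at h
    exact_mod_cast h.trans hlow
  have hnk : |n| ^ (j+3) ≤ (a:ℤ) ^ (j+1) := by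
    have h := Real.rpow_le_rpow (Real.rpow_nonneg hx0 _) hlow (le_of_lt hs)
    rw [← Real.rpow_mul hx0] at h
    rw [div_mul_cancel₀ _ (ne_of_gt hs)] at h
    rw [Real.rpow_natCast] at h
    have he3 : ((j+3:ℕ):ℝ) - 2 = ((j+1:ℕ):ℝ) := by push_cast; ring
    rw [he3, Real.rpow_natCast] at h
    exact_mod_cast h
  have ha1 : 1 ≤ a := by exact_mod_cast hxabs.trans hna
  -- basic int facts
  have hA1 : (1:ℤ) ≤ (a:ℤ) := by exact_mod_cast ha1
  have hB2 : (2:ℤ) ≤ (b:ℤ) := by exact_mod_cast (by omega : 2 ≤ b)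
  have hC3 : (3:ℤ) ≤ (c:ℤ) := by exact_mod_cast (by omega : 3 ≤ c)
  have hD4 : (4:ℤ) ≤ (d:ℤ) := by exact_mod_cast (by omega : 4 ≤ d)
  have hABz : (a:ℤ) < (b:ℤ) := by exact_mod_cast hab
  have hBCz : (b:ℤ) < (c:ℤ) := by exact_mod_cast hbc
  have hCDz : (c:ℤ) < (d:ℤ) := by exact_mod_cast hcd
  have hban : (0:ℤ) < (b:ℤ) - a := by linarith
  have hdcn : (0:ℤ) < (d:ℤ) - c := by linarith
  have hnlo : -(a:ℤ) ≤ n := (abs_le.mp hna).1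
  -- extract the four k-th powers
  obtain ⟨x1, hx1p, he_ac⟩ := hD a (by simp) c (by simp) (by omega)
  obtain ⟨x2, hx2p, he_bd⟩ := hD b (by simp) d (by simp) (by omega)
  obtain ⟨x3, hx3p, he_ad⟩ := hD a (by simp) d (by simp) (by omega)
  obtain ⟨x4, hx4p, he_bc⟩ := hD b (by simp) c (by simp) (by omega)
  have hPz : ((x1*x2 : ℕ) : ℤ)^(j+3) = ((a:ℤ)*c + n)*((b:ℤ)*d + n) := by
    push_cast
    rw [mul_pow, ← he_ac, ← he_bd]
  have hQz : ((x3*x4 : ℕ) : ℤ)^(j+3) = ((a:ℤ)*d + n)*((b:ℤ)*c + n) := by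
    push_cast
    rw [mul_pow, ← he_ad, ← he_bc]
  have hdiffz : ((x1*x2 : ℕ) : ℤ)^(j+3) - ((x3*x4 : ℕ) : ℤ)^(j+3)
      = n * ((b:ℤ) - a) * ((d:ℤ) - c) := by
    rw [hPz, hQz]; ring
  have hne : x1*x2 ≠ x3*x4 := by
    intro h
    rw [h, sub_self] at hdiffz
    exact (mul_ne_zero (mul_ne_zero hn (ne_of_gt hban)) (ne_of_gt hdcn)) hdiffz.symm
  -- quadratic fact
  have hcd4 : (c:ℤ)*d ≤ 4*(((c:ℤ)-1)*((d:ℤ)-1)) := by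
    nlinarith [mul_nonneg (by linarith : (0:ℤ) ≤ (c:ℤ)-3) (by linarith : (0:ℤ) ≤ (d:ℤ)-4)]
  -- lower bounds for both products
  have hminP : (a:ℤ)*b*c*d ≤ 4*(((x1*x2 : ℕ):ℤ))^(j+3) := by
    rw [hPz]
    have u1 : (a:ℤ)*((c:ℤ)-1) ≤ (a:ℤ)*c + n := by nlinarith [hnlo]
    have u2 : (b:ℤ)*((d:ℤ)-1) ≤ (b:ℤ)*d + n := by nlinarith [hnlo]
    have w1 : (0:ℤ) ≤ (b:ℤ)*((d:ℤ)-1) := mul_nonneg (by linarith) (by linarith)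
    have w2 : (0:ℤ) ≤ (a:ℤ)*c + n :=
      le_trans (mul_nonneg (by linarith) (by linarith)) u1
    have key := mul_le_mul u1 u2 w1 w2
    have h2 : (a:ℤ)*b*((c:ℤ)*d) ≤ (a:ℤ)*b*(4*(((c:ℤ)-1)*((d:ℤ)-1))) :=
      mul_le_mul_of_nonneg_left hcd4 (mul_nonneg (by linarith) (by linarith))
    linarith [key, h2]
  have hminQ : (a:ℤ)*b*c*d ≤ 4*(((x3*x4 : ℕ):ℤ))^(j+3) := by
    rw [hQz]
    have u1 : (a:ℤ)*((d:ℤ)-1) ≤ (a:ℤ)*d + n := by nlinarith [hnlo]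
    have u2 : (b:ℤ)*((c:ℤ)-1) ≤ (b:ℤ)*c + n := by nlinarith [hnlo]
    have w1 : (0:ℤ) ≤ (b:ℤ)*((c:ℤ)-1) := mul_nonneg (by linarith) (by linarith)
    have w2 : (0:ℤ) ≤ (a:ℤ)*d + n :=
      le_trans (mul_nonneg (by linarith) (by linarith)) u1
    have key := mul_le_mul u1 u2 w1 w2
    have h2 : (a:ℤ)*b*((c:ℤ)*d) ≤ (a:ℤ)*b*(4*(((c:ℤ)-1)*((d:ℤ)-1))) :=
      mul_le_mul_of_nonneg_left hcd4 (mul_nonneg (by linarith) (by linarith))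
    linarith [key, h2]
  -- the gap inequality for the smaller of the two
  obtain ⟨m, hm1, hmin, hkey⟩ : ∃ m : ℕ, 0 < m ∧ (a:ℤ)*b*c*d ≤ 4*((m:ℤ))^(j+3) ∧
      ((j:ℤ)+3) * (m:ℤ)^(j+2) ≤ |n| * ((b:ℤ) - a) * ((d:ℤ) - c) := by
    rcases lt_or_gt_of_ne hne with hlt | hgt
    · refine ⟨x1*x2, Nat.mul_pos hx1p hx2p, hminP, ?_⟩
      have hstep : (x1*x2)^(j+3) + (j+3)*(x1*x2)^(j+2) ≤ (x3*x4)^(j+3) :=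
        le_trans (helper1 (j+2) (x1*x2)) (Nat.pow_le_pow_left hlt _)
      have hz : ((x1*x2:ℕ):ℤ)^(j+3) + ((j:ℤ)+3)*((x1*x2:ℕ):ℤ)^(j+2)
          ≤ ((x3*x4:ℕ):ℤ)^(j+3) := by exact_mod_cast hstep
      have h3 : -(n * ((b:ℤ) - a) * ((d:ℤ) - c)) ≤ |n| * ((b:ℤ) - a) * ((d:ℤ) - c) := by
        have h1 : -n ≤ |n| := neg_le_abs n
        calc -(n * ((b:ℤ) - a) * ((d:ℤ) - c)) = (-n) * (((b:ℤ) - a) * ((d:ℤ) - c)) := by ring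
          _ ≤ |n| * (((b:ℤ) - a) * ((d:ℤ) - c)) :=
            mul_le_mul_of_nonneg_right h1 (mul_nonneg hban.le hdcn.le)
          _ = |n| * ((b:ℤ) - a) * ((d:ℤ) - c) := by ring
      linarith [hdiffz, hz, h3]
    · refine ⟨x3*x4, Nat.mul_pos hx3p hx4p, hminQ, ?_⟩
      have hstep : (x3*x4)^(j+3) + (j+3)*(x3*x4)^(j+2) ≤ (x1*x2)^(j+3) :=
        le_trans (helper1 (j+2) (x3*x4)) (Nat.pow_le_pow_left hgt _)
      have hz : ((x3*x4:ℕ):ℤ)^(j+3) + ((j:ℤ)+3)*((x3*x4:ℕ):ℤ)^(j+2)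
          ≤ ((x1*x2:ℕ):ℤ)^(j+3) := by exact_mod_cast hstep
      have h3 : n * ((b:ℤ) - a) * ((d:ℤ) - c) ≤ |n| * ((b:ℤ) - a) * ((d:ℤ) - c) := by
        have h1 : n ≤ |n| := le_abs_self n
        calc n * ((b:ℤ) - a) * ((d:ℤ) - c) = n * (((b:ℤ) - a) * ((d:ℤ) - c)) := by ring
          _ ≤ |n| * (((b:ℤ) - a) * ((d:ℤ) - c)) :=
            mul_le_mul_of_nonneg_right h1 (mul_nonneg hban.le hdcn.le)
          _ = |n| * ((b:ℤ) - a) * ((d:ℤ) - c) := by ring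
      linarith [hdiffz, hz, h3]
  -- back to ℕ
  set N : ℕ := n.natAbs with hN
  have hminN : a*b*c*d ≤ 4*m^(j+3) := by exact_mod_cast hmin
  have hkeyN : (j+3) * m^(j+2) ≤ N*(b-a)*(d-c) := by
    have hcast : (((N*(b-a)*(d-c)) : ℕ) : ℤ) = |n| * ((b:ℤ) - a) * ((d:ℤ) - c) := by
      simp only [hN]
      push_cast [Nat.cast_sub hab.le, Nat.cast_sub hcd.le, Int.natCast_natAbs]
      ring
    have : (((j+3) * m^(j+2) : ℕ) : ℤ) ≤ (((N*(b-a)*(d-c)) : ℕ) : ℤ) := by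
      rw [hcast]; push_cast; exact_mod_cast hkey
    exact_mod_cast this
  have hNk : N^(j+3) ≤ a^(j+1) := by
    have : ((N:ℤ))^(j+3) ≤ ((a:ℤ))^(j+1) := by
      simp only [hN, Int.natCast_natAbs]; exact hnk
    exact_mod_cast this
  -- endgame in ℕ
  have hbd1 : N*(b-a)*(d-c) ≤ N*b*d :=
    Nat.mul_le_mul (Nat.mul_le_mul le_rfl (Nat.sub_le b a)) (Nat.sub_le d c)
  have s1 : (j+3) * m^(j+2) ≤ N*b*d := hkeyN.trans hbd1
  have s2 : ((j+3) * m^(j+2))^(j+3) ≤ (N*b*d)^(j+3) := Nat.pow_le_pow_left s1 _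
  have s3 : (j+3)^(j+3) * (m^(j+3))^(j+2) ≤ a^(j+1) * (b^(j+3) * d^(j+3)) := by
    calc (j+3)^(j+3) * (m^(j+3))^(j+2) = ((j+3) * m^(j+2))^(j+3) := by
          rw [mul_pow, ← pow_mul, ← pow_mul, Nat.mul_comm (j+3) (j+2)]
      _ ≤ (N*b*d)^(j+3) := s2
      _ = N^(j+3) * (b^(j+3) * d^(j+3)) := by rw [mul_pow, mul_pow]; ring
      _ ≤ a^(j+1) * (b^(j+3) * d^(j+3)) := Nat.mul_le_mul hNk le_rfl
  have s4 : (a*b*c*d)^(j+2) ≤ 4^(j+2) * (m^(j+3))^(j+2) := by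
    calc (a*b*c*d)^(j+2) ≤ (4*m^(j+3))^(j+2) := Nat.pow_le_pow_left hminN _
      _ = 4^(j+2) * (m^(j+3))^(j+2) := by rw [mul_pow]
  have s5 : (j+3)^(j+3) * (a*b*c*d)^(j+2) ≤ 4^(j+2) * (a^(j+1) * (b^(j+3)*d^(j+3))) := by
    calc (j+3)^(j+3) * (a*b*c*d)^(j+2)
        ≤ (j+3)^(j+3) * (4^(j+2)*(m^(j+3))^(j+2)) := Nat.mul_le_mul le_rfl s4
      _ = 4^(j+2) * ((j+3)^(j+3) * (m^(j+3))^(j+2)) := by ring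
      _ ≤ 4^(j+2) * (a^(j+1)*(b^(j+3)*d^(j+3))) := Nat.mul_le_mul le_rfl s3
  have s6 : (a*b*b*d)^(j+2) ≤ (a*b*c*d)^(j+2) :=
    Nat.pow_le_pow_left (Nat.mul_le_mul (Nat.mul_le_mul le_rfl hbc.le) le_rfl) _
  have s7 : (j+3)^(j+3) * (a*b*b*d)^(j+2) ≤ 4^(j+2) * (a^(j+1)*(b^(j+3)*d^(j+3))) :=
    le_trans (Nat.mul_le_mul le_rfl s6) s5
  have e1 : (j+3)^(j+3) * (a*b*b*d)^(j+2)
      = ((j+3)^(j+3) * (a*b^(j+1))) * (a^(j+1)*b^(j+3)*d^(j+2)) := by ring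
  have e2 : 4^(j+2) * (a^(j+1)*(b^(j+3)*d^(j+3)))
      = (4^(j+2) * d) * (a^(j+1)*b^(j+3)*d^(j+2)) := by ring
  rw [e1, e2] at s7
  have hTpos : 0 < a^(j+1)*b^(j+3)*d^(j+2) :=
    Nat.mul_pos (Nat.mul_pos (pow_pos ha1 _) (pow_pos (by omega) _)) (pow_pos (by omega) _)
  have s8 : (j+3)^(j+3) * (a*b^(j+1)) ≤ 4^(j+2)*d := Nat.le_of_mul_le_mul_right s7 hTpos
  have s9 : d ≤ a * b^(j+1) := by
    calc d ≤ a^(j+2) := hcon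
      _ = a * a^(j+1) := by ring
      _ ≤ a * b^(j+1) := Nat.mul_le_mul le_rfl (Nat.pow_le_pow_left hab.le _)
  have s10 : (j+3)^(j+3) * (a*b^(j+1)) ≤ 4^(j+2) * (a*b^(j+1)) :=
    s8.trans (Nat.mul_le_mul le_rfl s9)
  have habpos : 0 < a*b^(j+1) := Nat.mul_pos ha1 (pow_pos (by omega) _)
  have s11 : (j+3)^(j+3) ≤ 4^(j+2) := Nat.le_of_mul_le_mul_right s10 habpos
  exact absurd s11 (not_le.mpr (helper2 j))
end

section
/- Let k ≥ 3, n a nonzero integer, and L a real number with k/(2k-4) < L < k/(k-2). Let a, b, c, d be positive integers with |n|^L ≤ a < b < c < d such that the product of any two distinct elements of {a, b, c, d} plus n is a k-th power of a positive integer. Then d > a^θ, where θ = (k-1)/(3 + k/L − k) > 1. -/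
private lemma aux_pow_s4 {p q : ℕ} (e : ℕ) (hq : 1 ≤ q) (h : q < p) :
    q ^ (e + 1) + p ^ e ≤ p ^ (e + 1) := by
  have h1 : q ^ e ≤ p ^ e := Nat.pow_le_pow_left h.le e
  have h2 : q + 1 ≤ p := h
  calc q ^ (e+1) + p ^ e = q ^ e * q + p ^ e := by ring
    _ ≤ p ^ e * q + p ^ e := by gcongr
    _ = p ^ e * (q + 1) := by ring
    _ ≤ p ^ e * p := Nat.mul_le_mul_left _ h2
    _ = p ^ (e+1) := by ring

set_option maxHeartbeats 1000000 in
private lemma aux_tail (j : ℕ) (A B C D N M : ℤ)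
    (hA : 1 ≤ A) (hAB : A < B) (hBC : B < C) (hCD : C < D) (hN : 1 ≤ N) (hM0 : 0 ≤ M)
    (hM1 : M ^ (j+2) ≤ N * ((B - A) * (D - C)))
    (hM2 : A * B * ((B - A) * (D - C)) < M ^ (j+3)) :
    A ^ (2*j+3) < N ^ (j+3) * D := by
  have hB0 : 0 < B := by linarith
  have hC0 : 0 < C := by linarith
  have hD0 : 0 < D := by linarith
  have hBA : 0 < B - A := by linarith
  have hDC : 0 < D - C := by linarith
  have hE : 0 < (B - A) * (D - C) := mul_pos hBA hDC
  have hAB0 : 0 < A * B := mul_pos (by linarith) hB0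
  have h1 : (A * B * ((B - A) * (D - C))) ^ (j+2) < (M ^ (j+3)) ^ (j+2) :=
    pow_lt_pow_left₀ hM2 (mul_pos hAB0 hE).le (by omega)
  have h3 : (M ^ (j+2)) ^ (j+3) ≤ (N * ((B - A) * (D - C))) ^ (j+3) :=
    pow_le_pow_left₀ (pow_nonneg hM0 _) hM1 _
  have h4 : (A * B * ((B - A) * (D - C))) ^ (j+2) < (N * ((B - A) * (D - C))) ^ (j+3) := by
    calc (A * B * ((B - A) * (D - C))) ^ (j+2) < (M ^ (j+3)) ^ (j+2) := h1
      _ = (M ^ (j+2)) ^ (j+3) := by rw [← pow_mul, ← pow_mul, Nat.mul_comm]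
      _ ≤ _ := h3
  have h5 : (A*B) ^ (j+2) * ((B-A)*(D-C)) ^ (j+2)
      < (N ^ (j+3) * ((B-A)*(D-C))) * ((B-A)*(D-C)) ^ (j+2) := by
    calc (A*B) ^ (j+2) * ((B-A)*(D-C)) ^ (j+2)
        = (A * B * ((B - A) * (D - C))) ^ (j+2) := (mul_pow _ _ _).symm
      _ < (N * ((B - A) * (D - C))) ^ (j+3) := h4
      _ = (N ^ (j+3) * ((B-A)*(D-C))) * ((B-A)*(D-C)) ^ (j+2) := by
          have hje : j+3 = (j+2)+1 := by omega
          rw [mul_pow, hje, pow_succ]; ring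
  have h6 : (A*B) ^ (j+2) < N ^ (j+3) * ((B-A)*(D-C)) :=
    lt_of_mul_lt_mul_right h5 (pow_nonneg hE.le _)
  have h7 : (B-A)*(D-C) < B * D :=
    mul_lt_mul'' (by linarith) (by linarith) hBA.le hDC.le
  have h8 : (A*B) ^ (j+2) < N ^ (j+3) * (B * D) := by
    have := mul_le_mul_of_nonneg_left h7.le (pow_nonneg (by linarith : (0:ℤ) ≤ N) (j+3))
    linarith
  have hBpow : B ^ (j+2) = B ^ (j+1) * B := by
    have hje : j+2 = (j+1)+1 := by omega
    rw [hje, pow_succ]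
  have h9 : (A ^ (j+2) * B ^ (j+1)) * B < (N ^ (j+3) * D) * B := by
    calc (A ^ (j+2) * B ^ (j+1)) * B = (A*B) ^ (j+2) := by
          rw [mul_pow, hBpow]; ring
      _ < N ^ (j+3) * (B * D) := h8
      _ = (N ^ (j+3) * D) * B := by ring
  have h10 : A ^ (j+2) * B ^ (j+1) < N ^ (j+3) * D := lt_of_mul_lt_mul_right h9 hB0.le
  have h11 : A ^ (j+1) ≤ B ^ (j+1) := pow_le_pow_left₀ (by linarith) hAB.le _
  calc A ^ (2*j+3) = A ^ (j+2) * A ^ (j+1) := by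
        rw [← pow_add]; congr 1; omega
    _ ≤ A ^ (j+2) * B ^ (j+1) :=
        mul_le_mul_of_nonneg_left h11 (pow_nonneg (by linarith) _)
    _ < N ^ (j+3) * D := h10

set_option maxHeartbeats 1000000 in
/-- Gap principle for quadruples with property `D_k(n)`: if `k/(2k-4) < L < k/(k-2)`
and `|n|^L ≤ a < b < c < d` with all pairwise products plus `n` k-th powers, then
`d > a^θ` where `θ = (k-1)/(3 + k/L - k) > 1`. -/
theorem stmt4 (k : ℕ) (hk : 3 ≤ k) (n : ℤ) (hn : n ≠ 0) (L : ℝ)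
    (hL1 : (k : ℝ) / (2 * (k : ℝ) - 4) < L) (hL2 : L < (k : ℝ) / ((k : ℝ) - 2))
    (a b c d : ℕ)
    (hlow : ((|n| : ℤ) : ℝ) ^ L ≤ (a : ℝ))
    (hab : a < b) (hbc : b < c) (hcd : c < d)
    (hD : ∀ u ∈ ({a, b, c, d} : Finset ℕ), ∀ v ∈ ({a, b, c, d} : Finset ℕ), u ≠ v →
      ∃ x : ℕ, 0 < x ∧ (u * v : ℤ) + n = (x : ℤ) ^ k) :
    (a : ℝ) ^ (((k : ℝ) - 1) / (3 + (k : ℝ) / L - (k : ℝ))) < (d : ℝ) := by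
  obtain ⟨j, rfl⟩ : ∃ j, k = j + 3 := ⟨k - 3, by omega⟩
  have hj0 : (0:ℝ) ≤ (j:ℝ) := Nat.cast_nonneg j
  have hL0 : 0 < L := by
    refine lt_trans ?_ hL1
    apply div_pos
    · push_cast; linarith
    · push_cast; linarith
  have hX1 : (1:ℝ) ≤ ((|n| : ℤ) : ℝ) := by
    exact_mod_cast Int.one_le_abs (by simpa using hn)
  have ha1 : (1:ℝ) ≤ (a:ℝ) := by
    have h0 : ((|n| : ℤ) : ℝ) ^ (0:ℝ) ≤ ((|n| : ℤ) : ℝ) ^ L :=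
      Real.rpow_le_rpow_of_exponent_le hX1 hL0.le
    rw [Real.rpow_zero] at h0
    linarith [hlow]
  have haN : 1 ≤ a := by exact_mod_cast ha1
  have hA0 : (0:ℝ) < (a:ℝ) := by linarith
  -- integer casts
  have ha1Z : (1:ℤ) ≤ (a:ℤ) := by exact_mod_cast haN
  have habZ : (a:ℤ) < (b:ℤ) := by exact_mod_cast hab
  have hbcZ : (b:ℤ) < (c:ℤ) := by exact_mod_cast hbc
  have hcdZ : (c:ℤ) < (d:ℤ) := by exact_mod_cast hcd
  -- extract the five k-th powers
  have ma : a ∈ ({a, b, c, d} : Finset ℕ) := by simp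
  have mb : b ∈ ({a, b, c, d} : Finset ℕ) := by simp
  have mc : c ∈ ({a, b, c, d} : Finset ℕ) := by simp
  have md : d ∈ ({a, b, c, d} : Finset ℕ) := by simp
  obtain ⟨y, hy0, hy⟩ := hD a ma b mb (by omega)
  obtain ⟨v, hv0, hv⟩ := hD a ma c mc (by omega)
  obtain ⟨u, hu0, hu⟩ := hD a ma d md (by omega)
  obtain ⟨z, hz0, hz⟩ := hD b mb c mc (by omega)
  obtain ⟨w, hw0, hw⟩ := hD b mb d md (by omega)
  have hP : ((u:ℤ) * (z:ℤ)) ^ (j+3) = ((a:ℤ) * (d:ℤ) + n) * ((b:ℤ) * (c:ℤ) + n) := by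
    rw [mul_pow, ← hu, ← hz]
  have hQ : ((v:ℤ) * (w:ℤ)) ^ (j+3) = ((a:ℤ) * (c:ℤ) + n) * ((b:ℤ) * (d:ℤ) + n) := by
    rw [mul_pow, ← hv, ← hw]
  have hdiff : ((u:ℤ) * (z:ℤ)) ^ (j+3) - ((v:ℤ) * (w:ℤ)) ^ (j+3)
      = n * (((a:ℤ) - (b:ℤ)) * ((d:ℤ) - (c:ℤ))) := by
    rw [hP, hQ]; ring
  -- key integer inequality
  have key : ((a:ℤ)) ^ (2*j+3) < |n| ^ (j+3) * (d:ℤ) := by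
    rcases lt_or_gt_of_ne hn with hneg | hpos
    · -- n < 0 : P = u*z is the larger
      have hy1 : (1:ℤ) ≤ (y:ℤ) ^ (j+3) := by
        have hy1' : (1:ℤ) ≤ (y:ℤ) := by exact_mod_cast hy0
        calc (1:ℤ) = 1 ^ (j+3) := by norm_num
          _ ≤ (y:ℤ) ^ (j+3) := pow_le_pow_left₀ (by norm_num) hy1' _
      have hnb : 1 - (a:ℤ) * (b:ℤ) ≤ n := by linarith [hy]
      have h1 : 0 < n * (((a:ℤ) - (b:ℤ)) * ((d:ℤ) - (c:ℤ))) := by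
        have := mul_pos (mul_pos_of_neg_of_neg hneg (by linarith : (a:ℤ) - (b:ℤ) < 0))
          (by linarith : (0:ℤ) < (d:ℤ) - (c:ℤ))
        nlinarith [this]
      have hltZ : ((v:ℤ) * (w:ℤ)) ^ (j+3) < ((u:ℤ) * (z:ℤ)) ^ (j+3) := by linarith
      have hltN : (v*w) ^ (j+3) < (u*z) ^ (j+3) := by exact_mod_cast hltZ
      have hPQ : v*w < u*z := lt_of_pow_lt_pow_left₀ _ (Nat.zero_le _) hltN
      have hQ1 : 1 ≤ v*w := Nat.one_le_iff_ne_zero.2 (by positivity)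
      have haux := aux_pow_s4 (j+2) hQ1 hPQ
      have hauxZ : ((v:ℤ) * (w:ℤ)) ^ (j+3) + ((u:ℤ) * (z:ℤ)) ^ (j+2)
          ≤ ((u:ℤ) * (z:ℤ)) ^ (j+3) := by exact_mod_cast haux
      have habs : |n| = -n := abs_of_neg hneg
      have hM1 : ((u:ℤ) * (z:ℤ)) ^ (j+2) ≤ |n| * (((b:ℤ) - (a:ℤ)) * ((d:ℤ) - (c:ℤ))) := by
        rw [habs]
        have hr : n * (((a:ℤ) - (b:ℤ)) * ((d:ℤ) - (c:ℤ)))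
            = (-n) * (((b:ℤ) - (a:ℤ)) * ((d:ℤ) - (c:ℤ))) := by ring
        linarith
      have hM2 : (a:ℤ) * (b:ℤ) * (((b:ℤ) - (a:ℤ)) * ((d:ℤ) - (c:ℤ)))
          < ((u:ℤ) * (z:ℤ)) ^ (j+3) := by
        rw [hP]
        have m1 : (a:ℤ) * ((d:ℤ) - (c:ℤ)) ≤ (a:ℤ) * ((d:ℤ) - (b:ℤ)) :=
          mul_le_mul_of_nonneg_left (by linarith) (by linarith)
        have e1 : (a:ℤ) * ((d:ℤ) - (b:ℤ)) = (a:ℤ) * (d:ℤ) - (a:ℤ) * (b:ℤ) := by ring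
        have g1 : (a:ℤ) * ((d:ℤ) - (c:ℤ)) < (a:ℤ) * (d:ℤ) + n := by linarith
        have m2 : (b:ℤ) * ((b:ℤ) - (a:ℤ)) ≤ (b:ℤ) * ((c:ℤ) - (a:ℤ)) :=
          mul_le_mul_of_nonneg_left (by linarith) (by linarith)
        have e2 : (b:ℤ) * ((c:ℤ) - (a:ℤ)) = (b:ℤ) * (c:ℤ) - (a:ℤ) * (b:ℤ) := by ring
        have g2 : (b:ℤ) * ((b:ℤ) - (a:ℤ)) < (b:ℤ) * (c:ℤ) + n := by linarith
        have p1 : ((a:ℤ) * ((d:ℤ) - (c:ℤ))) * ((b:ℤ) * ((b:ℤ) - (a:ℤ)))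
            < ((a:ℤ) * (d:ℤ) + n) * ((b:ℤ) * (c:ℤ) + n) :=
          mul_lt_mul'' g1 g2 (mul_nonneg (by linarith) (by linarith))
            (mul_nonneg (by linarith) (by linarith))
        have e3 : ((a:ℤ) * ((d:ℤ) - (c:ℤ))) * ((b:ℤ) * ((b:ℤ) - (a:ℤ)))
            = (a:ℤ) * (b:ℤ) * (((b:ℤ) - (a:ℤ)) * ((d:ℤ) - (c:ℤ))) := by ring
        linarith
      exact aux_tail j (a:ℤ) (b:ℤ) (c:ℤ) (d:ℤ) (|n|) ((u:ℤ) * (z:ℤ))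
        ha1Z habZ hbcZ hcdZ (by rw [habs]; linarith) (by positivity) hM1 hM2
    · -- n > 0 : Q = v*w is the larger
      have h1 : n * (((a:ℤ) - (b:ℤ)) * ((d:ℤ) - (c:ℤ))) < 0 := by
        have := mul_pos (mul_pos hpos (by linarith : (0:ℤ) < (b:ℤ) - (a:ℤ)))
          (by linarith : (0:ℤ) < (d:ℤ) - (c:ℤ))
        nlinarith [this]
      have hltZ : ((u:ℤ) * (z:ℤ)) ^ (j+3) < ((v:ℤ) * (w:ℤ)) ^ (j+3) := by linarith
      have hltN : (u*z) ^ (j+3) < (v*w) ^ (j+3) := by exact_mod_cast hltZ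
      have hPQ : u*z < v*w := lt_of_pow_lt_pow_left₀ _ (Nat.zero_le _) hltN
      have hP1 : 1 ≤ u*z := Nat.one_le_iff_ne_zero.2 (by positivity)
      have haux := aux_pow_s4 (j+2) hP1 hPQ
      have hauxZ : ((u:ℤ) * (z:ℤ)) ^ (j+3) + ((v:ℤ) * (w:ℤ)) ^ (j+2)
          ≤ ((v:ℤ) * (w:ℤ)) ^ (j+3) := by exact_mod_cast haux
      have habs : |n| = n := abs_of_pos hpos
      have hM1 : ((v:ℤ) * (w:ℤ)) ^ (j+2) ≤ |n| * (((b:ℤ) - (a:ℤ)) * ((d:ℤ) - (c:ℤ))) := by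
        rw [habs]
        have hr : n * (((a:ℤ) - (b:ℤ)) * ((d:ℤ) - (c:ℤ)))
            = -(n * (((b:ℤ) - (a:ℤ)) * ((d:ℤ) - (c:ℤ)))) := by ring
        linarith
      have hM2 : (a:ℤ) * (b:ℤ) * (((b:ℤ) - (a:ℤ)) * ((d:ℤ) - (c:ℤ)))
          < ((v:ℤ) * (w:ℤ)) ^ (j+3) := by
        rw [hQ]
        have e1 : (a:ℤ) * (c:ℤ) < (a:ℤ) * (c:ℤ) + n := by linarith
        have e2 : (b:ℤ) * (d:ℤ) < (b:ℤ) * (d:ℤ) + n := by linarith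
        have p1 : ((a:ℤ) * (c:ℤ)) * ((b:ℤ) * (d:ℤ))
            < ((a:ℤ) * (c:ℤ) + n) * ((b:ℤ) * (d:ℤ) + n) :=
          mul_lt_mul'' e1 e2 (by positivity) (by positivity)
        have c1 : (b:ℤ) - (a:ℤ) < (c:ℤ) := by linarith
        have c2 : (d:ℤ) - (c:ℤ) < (d:ℤ) := by linarith
        have p2 : ((b:ℤ) - (a:ℤ)) * ((d:ℤ) - (c:ℤ)) < (c:ℤ) * (d:ℤ) :=
          mul_lt_mul'' c1 c2 (by linarith) (by linarith)
        have p3 : (a:ℤ) * (b:ℤ) * (((b:ℤ) - (a:ℤ)) * ((d:ℤ) - (c:ℤ)))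
            < (a:ℤ) * (b:ℤ) * ((c:ℤ) * (d:ℤ)) :=
          mul_lt_mul_of_pos_left p2 (by nlinarith)
        have e3 : (a:ℤ) * (b:ℤ) * ((c:ℤ) * (d:ℤ)) = ((a:ℤ) * (c:ℤ)) * ((b:ℤ) * (d:ℤ)) := by
          ring
        linarith
      exact aux_tail j (a:ℤ) (b:ℤ) (c:ℤ) (d:ℤ) (|n|) ((v:ℤ) * (w:ℤ))
        ha1Z habZ hbcZ hcdZ (by rw [habs]; linarith) (by positivity) hM1 hM2
  -- move to the reals
  have keyR : (a:ℝ) ^ (2*j+3) < ((|n| : ℤ) : ℝ) ^ (j+3) * (d:ℝ) := by exact_mod_cast key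
  have hX0 : (0:ℝ) ≤ ((|n| : ℤ) : ℝ) := by linarith
  have hXa : ((|n| : ℤ) : ℝ) ≤ (a:ℝ) ^ (1/L) := by
    have h := Real.rpow_le_rpow (Real.rpow_nonneg hX0 L) hlow (by positivity : (0:ℝ) ≤ 1/L)
    rwa [← Real.rpow_mul hX0, mul_one_div, div_self hL0.ne', Real.rpow_one] at h
  have hXk : ((|n| : ℤ) : ℝ) ^ (j+3) ≤ (a:ℝ) ^ (((j:ℝ)+3)/L) := by
    calc ((|n| : ℤ) : ℝ) ^ (j+3) ≤ ((a:ℝ) ^ (1/L)) ^ (j+3) := pow_le_pow_left₀ hX0 hXa _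
      _ = (a:ℝ) ^ ((1/L) * ((j:ℝ)+3)) := by
          rw [← Real.rpow_natCast ((a:ℝ) ^ (1/L)) (j+3), ← Real.rpow_mul hA0.le]
          congr 1
          push_cast
          ring
      _ = (a:ℝ) ^ (((j:ℝ)+3)/L) := by rw [one_div, inv_mul_eq_div]
  have step : (a:ℝ) ^ (2*j+3) < (a:ℝ) ^ (((j:ℝ)+3)/L) * (d:ℝ) :=
    lt_of_lt_of_le keyR (mul_le_mul_of_nonneg_right hXk (by positivity))
  have stepR : (a:ℝ) ^ ((2*(j:ℝ)+3)) < (a:ℝ) ^ (((j:ℝ)+3)/L) * (d:ℝ) := by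
    rw [show (2*(j:ℝ)+3) = ((2*j+3 : ℕ) : ℝ) by push_cast; ring, Real.rpow_natCast]
    exact step
  have hkey2 : (a:ℝ) ^ (2*(j:ℝ)+3 - ((j:ℝ)+3)/L) < (d:ℝ) := by
    have hT : (0:ℝ) < (a:ℝ) ^ (((j:ℝ)+3)/L) := Real.rpow_pos_of_pos hA0 _
    rw [Real.rpow_sub hA0, div_lt_iff₀ hT]
    linarith [stepR]
  -- exponent bounds
  push_cast at hL1 hL2 ⊢
  have hT1 : (j:ℝ)+1 < ((j:ℝ)+3)/L := by
    rw [lt_div_iff₀ hL0]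
    have hden : ((j:ℝ)+3) - 2 = (j:ℝ)+1 := by ring
    rw [hden, lt_div_iff₀ (by linarith : (0:ℝ) < (j:ℝ)+1)] at hL2
    linarith
  have hT2 : ((j:ℝ)+3)/L < 2*(j:ℝ)+2 := by
    rw [div_lt_iff₀ hL0]
    have hden : 2*((j:ℝ)+3) - 4 = 2*(j:ℝ)+2 := by ring
    rw [hden, div_lt_iff₀ (by linarith : (0:ℝ) < 2*(j:ℝ)+2)] at hL1
    linarith
  have hs : (0:ℝ) < 3 + ((j:ℝ)+3)/L - ((j:ℝ)+3) := by linarith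
  have hexp : (((j:ℝ)+3) - 1) / (3 + ((j:ℝ)+3)/L - ((j:ℝ)+3)) ≤ 2*(j:ℝ)+3 - ((j:ℝ)+3)/L := by
    rw [div_le_iff₀ hs]
    nlinarith [mul_nonneg (by linarith : (0:ℝ) ≤ ((j:ℝ)+3)/L - (j:ℝ) - 1)
      (by linarith : (0:ℝ) ≤ 2*(j:ℝ)+2 - ((j:ℝ)+3)/L)]
  calc (a:ℝ) ^ ((((j:ℝ)+3) - 1) / (3 + ((j:ℝ)+3)/L - ((j:ℝ)+3)))
      ≤ (a:ℝ) ^ (2*(j:ℝ)+3 - ((j:ℝ)+3)/L) := Real.rpow_le_rpow_of_exponent_le ha1 hexp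
    _ < (d:ℝ) := hkey2
end

section
/- Let p be a prime, k ≥ 2 with k dividing p − 1, and let S_k = {x^k : x ∈ F_p*} be the set of nonzero k-th powers in F_p. Let A, B ⊆ F_p* with |A|, |B| ≥ 2, and let λ ∈ F_p*. If ab + λ ∈ S_k ∪ {0} for all a ∈ A and b ∈ B, then |A|·|B| ≤ |S_k| + |B ∩ (−λ·A⁻¹)| + |A| − 1, where A⁻¹ = {a⁻¹ : a ∈ A}. -/
open Finset

open Finset Polynomial

lemma psz {F : Type*} [Field F] [DecidableEq F] (A : Finset F) (c : F → F)
    (h0 : ∀ a ∈ A, a ≠ 0)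
    (hps : ∀ t, 1 ≤ t → t ≤ A.card → ∑ a ∈ A, c a * a ^ t = 0) :
    ∀ a ∈ A, c a = 0 := by
  intro a0 ha0
  have hcard : 1 ≤ A.card := Finset.card_pos.2 ⟨a0, ha0⟩
  set R : Polynomial F := Polynomial.X * ∏ a ∈ A.erase a0, (Polynomial.X - Polynomial.C a) with hR
  have hprodne : (∏ a ∈ A.erase a0, (Polynomial.X - Polynomial.C a)) ≠ 0 :=
    Finset.prod_ne_zero_iff.2 fun a _ => Polynomial.X_sub_C_ne_zero a
  have hdeg : R.natDegree = A.card := by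
    rw [hR, Polynomial.natDegree_mul Polynomial.X_ne_zero hprodne,
      Polynomial.natDegree_X, Polynomial.natDegree_prod _ _ (fun a _ => Polynomial.X_sub_C_ne_zero a)]
    simp only [Polynomial.natDegree_X_sub_C, Finset.sum_const, smul_eq_mul, mul_one,
      Finset.card_erase_of_mem ha0]
    omega
  have hc0 : R.coeff 0 = 0 := by
    rw [Polynomial.coeff_zero_eq_eval_zero, hR]
    simp
  have key : ∑ a ∈ A, c a * R.eval a = 0 := by
    have : ∀ a ∈ A, c a * R.eval a
        = ∑ i ∈ Finset.range (A.card + 1), R.coeff i * (c a * a ^ i) := by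
      intro a _
      rw [Polynomial.eval_eq_sum_range' (by omega : R.natDegree < A.card + 1), Finset.mul_sum]
      exact Finset.sum_congr rfl fun i _ => by ring
    rw [Finset.sum_congr rfl this, Finset.sum_comm]
    apply Finset.sum_eq_zero
    intro i hi
    rw [← Finset.mul_sum]
    rcases Nat.eq_zero_or_pos i with h | h
    · rw [h, hc0, zero_mul]
    · rw [hps i h (by simpa using Nat.lt_succ_iff.1 (Finset.mem_range.1 hi)), mul_zero]
  have key2 : ∑ a ∈ A, c a * R.eval a = c a0 * R.eval a0 := by
    rw [← Finset.add_sum_erase _ _ ha0]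
    have : ∑ a ∈ A.erase a0, c a * R.eval a = 0 := by
      apply Finset.sum_eq_zero
      intro a ha
      have : R.eval a = 0 := by
        rw [hR]
        simp only [Polynomial.eval_mul, Polynomial.eval_X, Polynomial.eval_prod,
          Polynomial.eval_sub, Polynomial.eval_C]
        rw [Finset.prod_eq_zero ha (by ring)]
        ring
      rw [this, mul_zero]
    rw [this, add_zero]
  have heval : R.eval a0 ≠ 0 := by
    rw [hR]
    simp only [Polynomial.eval_mul, Polynomial.eval_X, Polynomial.eval_prod,
      Polynomial.eval_sub, Polynomial.eval_C]
    apply mul_ne_zero (h0 a0 ha0)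
    exact Finset.prod_ne_zero_iff.2 fun a ha => sub_ne_zero.2 (Finset.ne_of_mem_erase ha).symm
  have := key2.symm.trans key
  exact (mul_eq_zero.1 this).resolve_right heval

lemma exc {p : ℕ} [Fact p.Prime] (A : Finset (ZMod p)) (hA : 1 ≤ A.card) :
    ∃ c : ZMod p → ZMod p, (∃ a ∈ A, c a ≠ 0) ∧ (∀ x, x ∉ A → c x = 0) ∧
      ∀ t, 1 ≤ t → t < A.card → ∑ a ∈ A, c a * a ^ t = 0 := by
  have hp : 1 < p := (Fact.out : p.Prime).one_lt
  set n := A.card with hn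
  let Φ : ({x // x ∈ A} → ZMod p) → (Fin (n - 1) → ZMod p) :=
    fun f t => ∑ a ∈ A.attach, f a * (a : ZMod p) ^ ((t : ℕ) + 1)
  have hcards : Fintype.card (Fin (n - 1) → ZMod p)
      < Fintype.card ({x // x ∈ A} → ZMod p) := by
    rw [Fintype.card_fun, Fintype.card_fun, ZMod.card, Fintype.card_fin, Fintype.card_coe]
    exact Nat.pow_lt_pow_right hp (by omega)
  obtain ⟨f, g, hfg, heq⟩ := Fintype.exists_ne_map_eq_of_card_lt Φ hcards
  classical
  refine ⟨fun x => if h : x ∈ A then f ⟨x, h⟩ - g ⟨x, h⟩ else 0, ?_, ?_, ?_⟩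
  · obtain ⟨a, ha⟩ := Function.ne_iff.1 hfg
    exact ⟨a, a.2, by simp [a.2, sub_ne_zero.2 ha]⟩
  · intro x hx; simp [hx]
  · intro t ht1 ht2
    rw [← Finset.sum_attach A]
    have := congrFun heq ⟨t - 1, by omega⟩
    simp only [Φ] at this
    have ht : t - 1 + 1 = t := by omega
    rw [ht] at this
    calc ∑ a ∈ A.attach, (if h : (a : ZMod p) ∈ A then f ⟨a, h⟩ - g ⟨a, h⟩ else 0) * (a : ZMod p) ^ t
        = ∑ a ∈ A.attach, (f a * (a : ZMod p) ^ t - g a * (a : ZMod p) ^ t) := by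
          apply Finset.sum_congr rfl; intro a _; simp [a.2]; ring
      _ = 0 := by rw [Finset.sum_sub_distrib, this, sub_self]

lemma fullsum {F : Type*} [Field F] (A : Finset F) (c : F → F) (lam b : F) (n : ℕ)
    (hn : n = A.card) (hn1 : 1 ≤ n)
    (hps : ∀ t, 1 ≤ t → t < n → ∑ a ∈ A, c a * a ^ t = 0)
    (j : ℕ) (hj : j ≤ n - 1) :
    ∑ a ∈ A, c a * a ^ j * (a * b + lam) ^ (n - 1 - j)
      = if j = 0 then lam ^ (n - 1) * ∑ a ∈ A, c a else 0 := by
  set m := n - 1 - j with hm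
  have step1 : ∀ a ∈ A, c a * a ^ j * (a * b + lam) ^ m
      = ∑ i ∈ Finset.range (m + 1), (b ^ i * lam ^ (m - i) * (m.choose i : F)) * (c a * a ^ (j + i)) := by
    intro a _
    rw [add_pow, Finset.mul_sum]
    apply Finset.sum_congr rfl
    intro i _
    rw [mul_pow, pow_add]
    ring
  rw [Finset.sum_congr rfl step1, Finset.sum_comm]
  have inner : ∀ i ∈ Finset.range (m + 1), 1 ≤ j + i →
      ∑ x ∈ A, (b ^ i * lam ^ (m - i) * (m.choose i : F)) * (c x * x ^ (j + i)) = 0 := by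
    intro i hi h1
    simp only [Finset.mem_range] at hi
    rw [← Finset.mul_sum, hps (j + i) h1 (by omega), mul_zero]
  rcases Nat.eq_zero_or_pos j with hj0 | hjpos
  · subst hj0
    rw [if_pos rfl, Finset.sum_eq_single_of_mem 0 (Finset.mem_range.2 (by omega))
      (fun i hi hine => inner i hi (by omega))]
    simp only [pow_zero, Nat.sub_zero, Nat.choose_zero_right, Nat.cast_one, mul_one, one_mul,
      Nat.add_zero, Nat.zero_add]
    rw [← Finset.mul_sum]
    have : m = n - 1 := by omega
    rw [this]
  · rw [if_neg (by omega)]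
    exact Finset.sum_eq_zero fun i hi => inner i hi (by omega)

lemma expandG {F : Type*} [Field F] (A : Finset F) (c : F → F) (lam b : F) (D : ℕ) :
    ∑ a ∈ A, Polynomial.C (c a) * (Polynomial.C a * Polynomial.X + Polynomial.C lam) ^ D
      = ∑ j ∈ Finset.range (D + 1), (Polynomial.X - Polynomial.C b) ^ j *
          Polynomial.C ((D.choose j : F) * ∑ a ∈ A, c a * a ^ j * (a * b + lam) ^ (D - j)) := by
  have key : ∀ a ∈ A, Polynomial.C (c a) * (Polynomial.C a * Polynomial.X + Polynomial.C lam) ^ D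
      = ∑ j ∈ Finset.range (D + 1), (Polynomial.X - Polynomial.C b) ^ j *
          Polynomial.C ((D.choose j : F) * (c a * a ^ j * (a * b + lam) ^ (D - j))) := by
    intro a _
    have h1 : Polynomial.C a * Polynomial.X + Polynomial.C lam
        = Polynomial.C a * (Polynomial.X - Polynomial.C b) + Polynomial.C (a * b + lam) := by
      rw [Polynomial.C_add, Polynomial.C_mul]; ring
    rw [h1, add_pow, Finset.mul_sum]
    apply Finset.sum_congr rfl
    intro j _
    rw [mul_pow]
    simp only [Polynomial.C_mul, Polynomial.C_pow, ← Polynomial.C_eq_natCast]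
    ring
  rw [Finset.sum_congr rfl key, Finset.sum_comm]
  apply Finset.sum_congr rfl
  intro j _
  rw [Finset.mul_sum, map_sum, Finset.mul_sum]

lemma rootb {F : Type*} [Field F] [DecidableEq F] (P : Polynomial F) (hP : P ≠ 0) (T : Finset F)
    (hT : ∀ t ∈ T, P.eval t = 0) : T.card ≤ P.natDegree := by
  have h1 : T ⊆ P.roots.toFinset := fun t ht =>
    Multiset.mem_toFinset.2 ((Polynomial.mem_roots hP).2 (hT t ht))
  calc T.card ≤ P.roots.toFinset.card := Finset.card_le_card h1
    _ ≤ Multiset.card P.roots := P.roots.toFinset_card_le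
    _ ≤ P.natDegree := P.card_roots'

/-- Stepanov-type bound: if `A, B ⊆ F_p*` with `|A|, |B| ≥ 2`, `λ ≠ 0` and
`AB + λ ⊆ S_k ∪ {0}` where `S_k` is the set of nonzero k-th powers, then
`|A||B| ≤ |S_k| + |B ∩ (-λ A⁻¹)| + |A| - 1`. -/
theorem stmt5 (p : ℕ) [Fact p.Prime] (k : ℕ) (hk : 2 ≤ k) (hkp : k ∣ p - 1)
    (A B : Finset (ZMod p)) (hA0 : ∀ a ∈ A, a ≠ 0) (hB0 : ∀ b ∈ B, b ≠ 0)
    (hA : 2 ≤ A.card) (hB : 2 ≤ B.card)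
    (lam : ZMod p) (hlam : lam ≠ 0)
    (h : ∀ a ∈ A, ∀ b ∈ B,
      a * b + lam = 0 ∨ ∃ x : ZMod p, x ≠ 0 ∧ a * b + lam = x ^ k) :
    A.card * B.card ≤
      ((Finset.univ.filter (fun z : ZMod p => z ≠ 0)).image (· ^ k)).card
        + (B ∩ A.image (fun a => -lam * a⁻¹)).card + A.card - 1 := by
  classical
  have hp : p.Prime := Fact.out
  have hp2 : 2 ≤ p := hp.two_le
  haveI : NeZero p := ⟨hp.ne_zero⟩
  set n := A.card with hn
  set m := B.card with hm
  set d := (p - 1) / k with hdd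
  have hkd : k * d = p - 1 := Nat.mul_div_cancel' hkp
  have hp1 : 2 ≤ p - 1 := le_trans hk (Nat.le_of_dvd (by omega) hkp)
  have hd1 : 1 ≤ d := by
    rcases Nat.eq_zero_or_pos d with h0 | h0
    · rw [h0, mul_zero] at hkd; omega
    · exact h0
  -- values to the d-th power are 1
  have hval : ∀ a ∈ A, ∀ b ∈ B, a * b + lam ≠ 0 → (a * b + lam) ^ d = 1 := by
    intro a ha b hb hne
    rcases h a ha b hb with h0 | ⟨x, hx0, hx⟩
    · exact absurd h0 hne
    · rw [hx, ← pow_mul, hkd]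
      exact ZMod.pow_card_sub_one_eq_one hx0
  -- n ≤ d + 1
  obtain ⟨b0, hb0⟩ := Finset.card_pos.1 (by omega : 0 < B.card)
  have hnd : n ≤ d + 1 := by
    set I := A.image (fun a => a * b0 + lam) with hI
    have hinj : Set.InjOn (fun a => a * b0 + lam) A := by
      intro x hx y hy hxy
      simp only at hxy
      exact mul_right_cancel₀ (hB0 b0 hb0) (by linear_combination hxy)
    have hcard : I.card = n := Finset.card_image_of_injOn hinj
    have hroot : (I.erase 0).card ≤ d := by
      have hres := rootb (Polynomial.X ^ d - Polynomial.C (1 : ZMod p))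
        (Polynomial.X_pow_sub_C_ne_zero hd1 1) (I.erase 0) ?_
      · rwa [Polynomial.natDegree_X_pow_sub_C] at hres
      intro t ht
      obtain ⟨a, ha, hat⟩ := Finset.mem_image.1 (Finset.mem_of_mem_erase ht)
      have htne : t ≠ 0 := Finset.ne_of_mem_erase ht
      simp only [Polynomial.eval_sub, Polynomial.eval_pow, Polynomial.eval_X,
        Polynomial.eval_C]
      rw [← hat, hval a ha b0 hb0 (by rw [hat]; exact htne), sub_self]
    have hsub : I ⊆ insert 0 (I.erase 0) := by
      intro x hx
      by_cases hx0 : x = 0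
      · simp [hx0]
      · exact Finset.mem_insert_of_mem (Finset.mem_erase.2 ⟨hx0, hx⟩)
    calc n = I.card := hcard.symm
      _ ≤ (insert 0 (I.erase 0)).card := Finset.card_le_card hsub
      _ ≤ (I.erase 0).card + 1 := Finset.card_insert_le _ _
      _ ≤ d + 1 := by omega
  set D := d + (n - 1) with hD
  have hDp : D ≤ p - 1 := by
    have : 2 * d ≤ k * d := Nat.mul_le_mul_right d hk
    omega
  -- the binomial coefficients are nonzero
  have hch : ∀ j, j ≤ D → (D.choose j : ZMod p) ≠ 0 := by
    intro j hj hzero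
    rw [ZMod.natCast_eq_zero_iff] at hzero
    have h1 : D.choose j ∣ D.factorial := by
      have := Nat.choose_mul_factorial_mul_factorial hj
      exact ⟨j.factorial * (D - j).factorial, by rw [← this]; ring⟩
    have h2 : p ∣ D.factorial := hzero.trans h1
    have := (Nat.Prime.dvd_factorial hp).1 h2
    omega
  -- get the weights
  obtain ⟨c, ⟨a1, ha1A, ha1⟩, hcsupp, hps⟩ := exc A (by omega)
  set σ := ∑ a ∈ A, c a with hσ
  set G : Polynomial (ZMod p) :=
    (∑ a ∈ A, Polynomial.C (c a) * (Polynomial.C a * Polynomial.X + Polynomial.C lam) ^ D)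
      - Polynomial.C (lam ^ (n - 1) * σ) with hG
  have hnD : n ≤ D := by omega
  -- G ≠ 0
  have hGne : G ≠ 0 := by
    intro hG0
    have hexp := expandG A c lam 0 D
    have hcoeff : G.coeff n
        = (D.choose n : ZMod p) * ∑ a ∈ A, c a * a ^ n * (a * 0 + lam) ^ (D - n) := by
      rw [hG, Polynomial.coeff_sub, hexp, Polynomial.finset_sum_coeff]
      rw [Finset.sum_eq_single_of_mem n (Finset.mem_range.2 (by omega))]
      · rw [map_zero, sub_zero, mul_comm ((Polynomial.X : Polynomial (ZMod p)) ^ n),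
          Polynomial.coeff_C_mul, Polynomial.coeff_X_pow, if_pos rfl, mul_one,
          Polynomial.coeff_C, if_neg (by omega : ¬ n = 0), sub_zero]
      · intro j _ hjn
        rw [map_zero, sub_zero, mul_comm ((Polynomial.X : Polynomial (ZMod p)) ^ j),
          Polynomial.coeff_C_mul, Polynomial.coeff_X_pow, if_neg (fun hh => hjn hh.symm),
          mul_zero]
    rw [hG0, Polynomial.coeff_zero] at hcoeff
    have hsum : ∑ a ∈ A, c a * a ^ n * (a * 0 + lam) ^ (D - n)
        = (∑ a ∈ A, c a * a ^ n) * lam ^ (D - n) := by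
      rw [Finset.sum_mul]
      apply Finset.sum_congr rfl
      intro a _
      ring_nf
    rw [hsum] at hcoeff
    have hps_n : ∑ a ∈ A, c a * a ^ n = 0 := by
      have h1 := hcoeff.symm
      rcases mul_eq_zero.1 h1 with h2 | h2
      · exact absurd h2 (hch n hnD)
      · rcases mul_eq_zero.1 h2 with h3 | h3
        · exact h3
        · exact absurd h3 (pow_ne_zero _ hlam)
    have := psz A c hA0 (fun t ht1 ht2 => by
      rcases Nat.lt_or_ge t n with hlt | hge
      · exact hps t ht1 hlt
      · have : t = n := by omega
        rw [this]; exact hps_n) a1 ha1A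
    exact ha1 this
  -- degree bound
  have hdegG : G.natDegree ≤ D := by
    rw [hG]
    apply le_trans (Polynomial.natDegree_sub_le _ _)
    rw [max_le_iff]
    refine ⟨?_, (Polynomial.natDegree_C _).le.trans (Nat.zero_le D)⟩
    apply Polynomial.natDegree_sum_le_of_forall_le
    intro a _
    apply le_trans (Polynomial.natDegree_mul_le)
    rw [Polynomial.natDegree_C, zero_add]
    apply le_trans (Polynomial.natDegree_pow_le)
    calc D * (Polynomial.C a * Polynomial.X + Polynomial.C lam).natDegree
        ≤ D * 1 := Nat.mul_le_mul_left D Polynomial.natDegree_linear_le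
      _ = D := mul_one D
  -- the bad set
  set Abad := A.image (fun a => -lam * a⁻¹) with hAbad
  have hgood : ∀ b ∈ B, b ∉ Abad → ∀ a ∈ A, a * b + lam ≠ 0 := by
    intro b hb hnb a ha heq
    apply hnb
    rw [hAbad]
    apply Finset.mem_image.2 ⟨a, ha, ?_⟩
    have hane := hA0 a ha
    field_simp
    linear_combination -heq
  have hbad : ∀ b, b ∈ B ∩ Abad → ∃ a0 ∈ A, a0 * b + lam = 0 := by
    intro b hbb
    obtain ⟨a0, ha0, hab⟩ := Finset.mem_image.1 (Finset.mem_of_mem_inter_right hbb)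
    refine ⟨a0, ha0, ?_⟩
    rw [← hab]
    have := hA0 a0 ha0
    field_simp
    ring
  set μ : ZMod p → ℕ := fun b => if b ∈ Abad then n - 1 else n with hμ
  have hμle : ∀ b, μ b ≤ n := by intro b; rw [hμ]; dsimp only; split <;> omega
  have hμ1 : ∀ b, 1 ≤ μ b := by intro b; rw [hμ]; dsimp only; split <;> omega
  -- key coefficient computation
  have hinner : ∀ b ∈ B, ∀ j, j < μ b →
      (∑ a ∈ A, c a * a ^ j * (a * b + lam) ^ (D - j))
        = if j = 0 then lam ^ (n - 1) * σ else 0 := by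
    intro b hb j hj
    have hjn : j ≤ n - 1 := by have := hμle b; omega
    have hfs := fullsum A c lam b n hn (by omega) (fun t ht1 ht2 => hps t ht1 (by omega)) j hjn
    by_cases hbA : b ∈ Abad
    · -- bad point
      have hjn2 : j < n - 1 := by
        have : μ b = n - 1 := by rw [hμ]; simp [hbA]
        omega
      obtain ⟨a0, ha0A, ha0b⟩ := hbad b (Finset.mem_inter.2 ⟨hb, hbA⟩)
      have hane : ∀ a ∈ A.erase a0, a * b + lam ≠ 0 := by
        intro a ha heq
        have haa : a = a0 := mul_right_cancel₀ (hB0 b hb) (by linear_combination heq - ha0b)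
        exact Finset.ne_of_mem_erase ha haa
      rw [← Finset.add_sum_erase _ _ ha0A] at hfs
      rw [← Finset.add_sum_erase _ _ ha0A]
      rw [ha0b, zero_pow (by omega : D - j ≠ 0), mul_zero, zero_add]
      rw [ha0b, zero_pow (by omega : n - 1 - j ≠ 0), mul_zero, zero_add] at hfs
      rw [← hfs]
      apply Finset.sum_congr rfl
      intro a ha
      have hDj : D - j = d + (n - 1 - j) := by omega
      rw [hDj, pow_add, hval a (Finset.mem_of_mem_erase ha) b hb (hane a ha), one_mul]
    · -- good point
      have hane : ∀ a ∈ A, a * b + lam ≠ 0 := hgood b hb hbA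
      rw [← hfs]
      apply Finset.sum_congr rfl
      intro a ha
      have hDj : D - j = d + (n - 1 - j) := by omega
      rw [hDj, pow_add, hval a ha b hb (hane a ha), one_mul]
  -- divisibility
  have hdvdG : ∀ b ∈ B, (Polynomial.X - Polynomial.C b) ^ (μ b) ∣ G := by
    intro b hb
    have hexp := expandG A c lam b D
    have hGeq : G = ∑ j ∈ Finset.Ico (μ b) (D + 1), (Polynomial.X - Polynomial.C b) ^ j *
        Polynomial.C ((D.choose j : ZMod p) * ∑ a ∈ A, c a * a ^ j * (a * b + lam) ^ (D - j)) := by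
      rw [hG, hexp, ← Finset.sum_range_add_sum_Ico _ (by have := hμle b; omega : μ b ≤ D + 1)]
      have hz : ∀ j ∈ Finset.range (μ b), (Polynomial.X - Polynomial.C b) ^ j *
          Polynomial.C ((D.choose j : ZMod p) * ∑ a ∈ A, c a * a ^ j * (a * b + lam) ^ (D - j))
          = if j = 0 then Polynomial.C (lam ^ (n - 1) * σ) else 0 := by
        intro j hjr
        rw [hinner b hb j (Finset.mem_range.1 hjr)]
        by_cases hj0 : j = 0
        · subst hj0; simp
        · simp [hj0]
      rw [Finset.sum_congr rfl hz, Finset.sum_ite_eq' (Finset.range (μ b)) 0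
        (fun _ => Polynomial.C (lam ^ (n - 1) * σ)), if_pos (Finset.mem_range.2 (hμ1 b))]
      ring
    rw [hGeq]
    exact Finset.dvd_sum fun j hj =>
      dvd_mul_of_dvd_left (pow_dvd_pow _ (Finset.mem_Ico.1 hj).1) _
  -- product divides
  have hprodd : (∏ b ∈ B, (Polynomial.X - Polynomial.C b) ^ (μ b)) ∣ G := by
    apply Finset.prod_dvd_of_coprime
    · intro b1 _ b2 _ hne
      exact ((Polynomial.pairwise_coprime_X_sub_C (Function.injective_id) hne).pow :)
    · exact fun b hb => hdvdG b hb
  -- degree count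
  have hdegsum : ∑ b ∈ B, μ b ≤ D := by
    have h1 := Polynomial.natDegree_le_of_dvd hprodd hGne
    rw [Polynomial.natDegree_prod _ _ (fun b _ =>
      pow_ne_zero _ (Polynomial.X_sub_C_ne_zero b))] at h1
    simp only [Polynomial.natDegree_pow, Polynomial.natDegree_X_sub_C, mul_one] at h1
    exact h1.trans hdegG
  -- compute the sum of multiplicities
  set e := (B ∩ Abad).card with he
  have hem : e ≤ m := by rw [he, hm]; exact Finset.card_le_card Finset.inter_subset_left
  have hcount : e * (n - 1) + (m - e) * n ≤ D := by
    have hsplit : ∑ b ∈ B, μ b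
        = ∑ b ∈ B.filter (· ∈ Abad), μ b + ∑ b ∈ B.filter (¬ · ∈ Abad), μ b :=
      (Finset.sum_filter_add_sum_filter_not B _ _).symm
    have h1 : ∑ b ∈ B.filter (· ∈ Abad), μ b = e * (n - 1) := by
      have hconst : ∀ b ∈ B.filter (· ∈ Abad), μ b = n - 1 := by
        intro b hbf
        rw [hμ]; dsimp only; rw [if_pos (Finset.mem_filter.1 hbf).2]
      rw [Finset.sum_congr rfl hconst, Finset.sum_const, smul_eq_mul,
        Finset.filter_mem_eq_inter, ← he]
    have h2 : ∑ b ∈ B.filter (¬ · ∈ Abad), μ b = (m - e) * n := by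
      have hconst : ∀ b ∈ B.filter (¬ · ∈ Abad), μ b = n := by
        intro b hbf
        rw [hμ]; dsimp only; rw [if_neg (Finset.mem_filter.1 hbf).2]
      rw [Finset.sum_congr rfl hconst, Finset.sum_const, smul_eq_mul]
      congr 1
      have := Finset.card_filter_add_card_filter_not (s := B) (p := (· ∈ Abad))
      rw [Finset.filter_mem_eq_inter] at this
      omega
    omega
  -- the image of k-th powers is at least d
  have hScard : d ≤ ((Finset.univ.filter (fun z : ZMod p => z ≠ 0)).image (· ^ k)).card := by
    set NZ := Finset.univ.filter (fun z : ZMod p => z ≠ 0) with hNZ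
    have hNZcard : NZ.card = p - 1 := by
      rw [hNZ, Finset.filter_ne', Finset.card_erase_of_mem (Finset.mem_univ 0)]
      simp [ZMod.card]
    have hfib : ∀ s ∈ NZ.image (· ^ k), (NZ.filter (fun x => x ^ k = s)).card ≤ k := by
      intro s _
      have hres := rootb (Polynomial.X ^ k - Polynomial.C s)
        (Polynomial.X_pow_sub_C_ne_zero (by omega) s) (NZ.filter (fun x => x ^ k = s)) ?_
      · rwa [Polynomial.natDegree_X_pow_sub_C] at hres
      intro t ht
      have := (Finset.mem_filter.1 ht).2
      simp [this]
    have hle := Finset.card_le_mul_card_image (f := (· ^ k)) NZ k hfib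
    rw [hNZcard] at hle
    have : k * d ≤ k * (NZ.image (· ^ k)).card := by rw [hkd]; exact hle
    exact Nat.le_of_mul_le_mul_left this (by omega)
  -- final arithmetic
  obtain ⟨f, hf⟩ := Nat.exists_eq_add_of_le hem
  obtain ⟨n', hn'⟩ : ∃ n', n = n' + 1 := ⟨n - 1, by omega⟩
  have hkey : n * m ≤ D + e := by
    have hb2 : e * n' + f * n ≤ D := by
      have : e * (n - 1) = e * n' := by rw [hn']; simp
      have hme : m - e = f := by omega
      rw [this, hme] at hcount
      exact hcount
    have hrw : n * m = (e * n' + f * n) + e := by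
      rw [hf, hn']; ring
    rw [hrw]
    exact Nat.add_le_add_right hb2 e
  calc n * m ≤ D + e := hkey
    _ = d + (n - 1) + e := by rw [hD]
    _ ≤ ((Finset.univ.filter (fun z : ZMod p => z ≠ 0)).image (· ^ k)).card + (n - 1) + e :=
        by omega
    _ ≤ ((Finset.univ.filter (fun z : ZMod p => z ≠ 0)).image (· ^ k)).card
        + (B ∩ A.image (fun a => -lam * a⁻¹)).card + n - 1 := by
      rw [← hAbad, ← he]; omega
end

section
/- Let p be a prime, k ≥ 2 with k dividing p − 1, and let S_k = {x^k : x ∈ F_p*}. Let A ⊆ F_p* and λ ∈ F_p*. If ab + λ ∈ S_k ∪ {0} for all distinct a, b ∈ A, then |A| ≤ √(2(p−1)/k) + 4. -/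
open Polynomial Finset

private lemma coeff_linear_pow {R : Type*} [CommRing R] (α β : R) (e w : ℕ) :
    ((C α * X + C β) ^ e).coeff w = (e.choose w : R) * α ^ w * β ^ (e - w) := by
  have h1 : (C α * X + C β) ^ e
      = ∑ i ∈ range (e + 1), C (α ^ i * (β ^ (e - i) * (e.choose i : R))) * X ^ i := by
    rw [add_pow]
    refine Finset.sum_congr rfl fun i _ => ?_
    rw [C_mul, C_mul, C_eq_natCast, mul_pow, ← C_pow, ← C_pow]
    ring
  rw [h1, finset_sum_coeff]
  simp only [coeff_C_mul, coeff_X_pow, mul_ite, mul_one, mul_zero]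
  rw [Finset.sum_ite_eq]
  by_cases hw : w ∈ range (e + 1)
  · rw [if_pos hw]; ring
  · rw [if_neg hw]
    have hw' : e < w := by
      simp only [Finset.mem_range] at hw; omega
    rw [Nat.choose_eq_zero_of_lt hw', Nat.cast_zero, zero_mul, zero_mul]

private lemma cast_choose_ne_zero {p : ℕ} [Fact p.Prime] {N r : ℕ} (hN : N < p) (hr : r ≤ N) :
    ((N.choose r : ℕ) : ZMod p) ≠ 0 := by
  have hp : p.Prime := Fact.out
  haveI : NeZero p := ⟨hp.pos.ne'⟩
  rw [Ne, ZMod.natCast_eq_zero_iff]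
  intro hdvd
  have hch : N.choose r ∣ Nat.factorial N :=
    ⟨Nat.factorial r * Nat.factorial (N - r), by
      rw [← Nat.choose_mul_factorial_mul_factorial hr]; ring⟩
  have h1 : p ∣ Nat.factorial N := hdvd.trans hch
  have h2 : p ≤ N := (Nat.Prime.dvd_factorial hp).mp h1
  omega

/-- If `A ⊆ F_p*`, `λ ≠ 0` and `ab + λ ∈ S_k ∪ {0}` for all distinct `a, b ∈ A`,
then `|A| ≤ √(2(p-1)/k) + 4`. -/
theorem stmt6 (p : ℕ) [Fact p.Prime] (k : ℕ) (hk : 2 ≤ k) (hkp : k ∣ p - 1)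
    (A : Finset (ZMod p)) (hA0 : ∀ a ∈ A, a ≠ 0)
    (lam : ZMod p) (hlam : lam ≠ 0)
    (h : ∀ a ∈ A, ∀ b ∈ A, a ≠ b →
      a * b + lam = 0 ∨ ∃ x : ZMod p, x ≠ 0 ∧ a * b + lam = x ^ k) :
    (A.card : ℝ) ≤ Real.sqrt (2 * ((p : ℝ) - 1) / k) + 4 := by
  classical
  have hp : p.Prime := Fact.out
  have hp2 : 2 ≤ p := hp.two_le
  set n := A.card with hncard
  set m := (p - 1) / k with hmdef
  have hkm : k * m = p - 1 := Nat.mul_div_cancel' hkp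
  have hm1 : 1 ≤ m := Nat.div_pos (Nat.le_of_dvd (by omega) hkp) (by omega)
  have hkR : (k : ℝ) ≠ 0 := Nat.cast_ne_zero.mpr (by omega)
  have hpm : ((p : ℝ) - 1) = (k : ℝ) * (m : ℝ) := by
    have h1 : ((p - 1 : ℕ) : ℝ) = ((k * m : ℕ) : ℝ) := by rw [hkm]
    rw [Nat.cast_sub (by omega : 1 ≤ p), Nat.cast_mul] at h1
    simpa using h1
  have hcast : 2 * ((p : ℝ) - 1) / k = 2 * (m : ℝ) := by
    rw [hpm]; field_simp
  have hpow : ∀ a ∈ A, ∀ b ∈ A, a ≠ b → ∀ e : ℕ, 1 ≤ e →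
      (a * b + lam) ^ (m + e) = (a * b + lam) ^ e := by
    intro a ha b hb hab e he
    rcases h a ha b hb hab with h0 | ⟨x, hx0, hx⟩
    · rw [h0, zero_pow (by omega : m + e ≠ 0), zero_pow (by omega : e ≠ 0)]
    · have h1 : (a * b + lam) ^ m = 1 := by
        rw [hx, ← pow_mul, hkm, ZMod.pow_card_sub_one_eq_one hx0]
      rw [pow_add, h1, one_mul]
  have htriv : n ≤ m + 2 := by
    rcases Finset.eq_empty_or_nonempty A with hA | ⟨a, ha⟩
    · simp [hncard, hA]
    · set f : Polynomial (ZMod p) := X ^ (m + 1) - X with hf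
      have hfc : f.coeff (m + 1) = 1 := by
        rw [hf, coeff_sub, coeff_X_pow_self, coeff_X, if_neg (by omega : ¬ 1 = m + 1), sub_zero]
      have hfne : f ≠ 0 := fun h0 => by simp [h0] at hfc
      have hfdeg : f.natDegree ≤ m + 1 := by
        apply le_trans (natDegree_sub_le _ _)
        simp [natDegree_X_pow, natDegree_X]
      have hinj : Set.InjOn (fun b => a * b + lam) (A.erase a) := by
        intro b1 h1 b2 h2 he
        have h3 := add_right_cancel he
        exact mul_left_cancel₀ (hA0 a ha) h3
      have hsub : (A.erase a).image (fun b => a * b + lam) ⊆ f.roots.toFinset := by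
        intro y hy
        rw [Finset.mem_image] at hy
        obtain ⟨b, hb, rfl⟩ := hy
        have hbA := Finset.mem_of_mem_erase hb
        have hba : a ≠ b := (Finset.ne_of_mem_erase hb).symm
        rw [Multiset.mem_toFinset, mem_roots']
        refine ⟨hfne, ?_⟩
        have h1 := hpow a ha b hbA hba 1 le_rfl
        rw [pow_one] at h1
        simp only [hf, IsRoot, eval_sub, eval_pow, eval_X]
        rw [h1, sub_self]
      have h1 : n - 1 ≤ m + 1 := by
        calc n - 1 = (A.erase a).card := (Finset.card_erase_of_mem ha).symm
          _ = ((A.erase a).image (fun b => a * b + lam)).card :=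
              (Finset.card_image_of_injOn hinj).symm
          _ ≤ f.roots.toFinset.card := Finset.card_le_card hsub
          _ ≤ Multiset.card f.roots := Multiset.toFinset_card_le _
          _ ≤ f.natDegree := f.card_roots'
          _ ≤ m + 1 := hfdeg
      omega
  by_cases hn5 : n ≤ 5
  · have h2 : (1 : ℝ) ≤ Real.sqrt (2 * ((p : ℝ) - 1) / k) := by
      rw [hcast, show (1:ℝ) = Real.sqrt 1 from Real.sqrt_one.symm]
      apply Real.sqrt_le_sqrt
      have hm : (1 : ℝ) ≤ (m : ℝ) := by exact_mod_cast hm1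
      linarith
    have h3 : (n : ℝ) ≤ 5 := by exact_mod_cast hn5
    linarith
  push_neg at hn5
  have hn6 : 6 ≤ n := hn5
  set D := (n - 2) / 2 with hDdef
  have hD2 : 2 ≤ D := by omega
  have h2D : 2 * D ≤ n - 2 := by omega
  have h2D1 : 2 * D + 1 ≤ n - 1 := by omega
  have hn3 : n - 3 ≤ 2 * D := by omega
  have hDm : 2 * D ≤ m := by omega
  have hmD : m + D < p := by
    have h2m : 2 * m ≤ k * m := Nat.mul_le_mul_right m hk
    omega
  obtain ⟨v, hvinj, hvmem⟩ :
      ∃ v : Fin n → ZMod p, Function.Injective v ∧ (∀ j, v j ∈ A) := by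
    have e := A.equivFin
    refine ⟨fun j => ((e.symm j : {x // x ∈ A}) : ZMod p), ?_, fun j => (e.symm j).2⟩
    intro j1 j2 h12
    exact e.symm.injective (Subtype.coe_injective h12)
  set W : Matrix (Fin n) (Fin n) (ZMod p) := (Matrix.vandermonde v).transpose with hW
  have hWunit : IsUnit W := by
    rw [Matrix.isUnit_iff_isUnit_det, hW, Matrix.det_transpose, Matrix.det_vandermonde,
      isUnit_iff_ne_zero]
    apply Finset.prod_ne_zero_iff.mpr
    intro i _
    apply Finset.prod_ne_zero_iff.mpr
    intro j hj
    exact sub_ne_zero_of_ne (hvinj.ne (Finset.mem_Ioi.mp hj).ne')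
  obtain ⟨c, hc⟩ := (Matrix.mulVec_surjective_iff_isUnit.mpr hWunit)
    (fun i => if (i : ℕ) = 2 * D + 1 then (1 : ZMod p) else 0)
  have hM : ∀ s : ℕ, s < n →
      (∑ j, c j * v j ^ s) = if s = 2 * D + 1 then (1 : ZMod p) else 0 := by
    intro s hs
    have h2 := congrFun hc ⟨s, hs⟩
    simp only [hW, Matrix.mulVec, dotProduct, Matrix.transpose_apply,
      Matrix.vandermonde_apply] at h2
    rw [← h2]
    exact Finset.sum_congr rfl fun j _ => mul_comm _ _
  have hkill : ∀ Q : Polynomial (ZMod p), Q.natDegree ≤ 2 * D →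
      (∑ j, c j * Q.eval (v j)) = 0 := by
    intro Q hQ
    have hev : ∀ j, Q.eval (v j) = ∑ s ∈ range (2 * D + 1), Q.coeff s * v j ^ s := fun j =>
      eval_eq_sum_range' (by omega) _
    calc (∑ j, c j * Q.eval (v j))
        = ∑ j, ∑ s ∈ range (2 * D + 1), Q.coeff s * (c j * v j ^ s) := by
          refine Finset.sum_congr rfl fun j _ => ?_
          rw [hev j, Finset.mul_sum]
          exact Finset.sum_congr rfl fun s _ => by ring
      _ = ∑ s ∈ range (2 * D + 1), Q.coeff s * (∑ j, c j * v j ^ s) := by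
          rw [Finset.sum_comm]
          exact Finset.sum_congr rfl fun s _ => (Finset.mul_sum _ _ _).symm
      _ = 0 := by
          apply Finset.sum_eq_zero
          intro s hs
          rw [Finset.mem_range] at hs
          rw [hM s (by omega), if_neg (by omega), mul_zero]
  set P : Polynomial (ZMod p) :=
    ∑ j, C (c j) * ((X - C (v j)) ^ D * (C (v j) * X + C lam) ^ (m + D)) with hP
  have hcF : ∀ (a : ZMod p) (u : ℕ), ((X - C a) ^ D).coeff u
      = (-a) ^ (D - u) * (D.choose u : ZMod p) := by
    intro a u
    rw [sub_eq_add_neg, ← C_neg, coeff_X_add_C_pow]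
  have hlin1 : ∀ a : ZMod p, (C a * X + C lam : Polynomial (ZMod p)).natDegree ≤ 1 := by
    intro a
    apply le_trans (natDegree_add_le _ _)
    exact max_le (le_trans (natDegree_C_mul_le _ _) natDegree_X_le) (by simp [natDegree_C])
  have hPdeg : P.natDegree ≤ m + 2 * D := by
    rw [hP]
    apply natDegree_sum_le_of_forall_le
    intro j _
    apply le_trans (natDegree_C_mul_le _ _)
    apply le_trans natDegree_mul_le
    have h1 : ((X - C (v j)) ^ D).natDegree ≤ D := by
      apply le_trans natDegree_pow_le
      rw [natDegree_X_sub_C, mul_one]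
    have h2 : ((C (v j) * X + C lam) ^ (m + D)).natDegree ≤ m + D := by
      apply le_trans natDegree_pow_le
      calc (m + D) * (C (v j) * X + C lam : Polynomial (ZMod p)).natDegree
          ≤ (m + D) * 1 := Nat.mul_le_mul_left _ (hlin1 (v j))
        _ = m + D := mul_one _
    omega
  have hPcoeff : P.coeff (D + 1)
      = (-1 : ZMod p) ^ D * ((m + D).choose (D + 1) : ZMod p) * lam ^ (m - 1) := by
    rw [hP, finset_sum_coeff]
    have hterm : ∀ j : Fin n,
        (C (c j) * ((X - C (v j)) ^ D * (C (v j) * X + C lam) ^ (m + D))).coeff (D + 1)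
        = ∑ uw ∈ antidiagonal (D + 1),
            c j * (((-(v j)) ^ (D - uw.1) * (D.choose uw.1 : ZMod p)) *
              (((m + D).choose uw.2 : ZMod p) * (v j) ^ uw.2 * lam ^ (m + D - uw.2))) := by
      intro j
      rw [coeff_C_mul, coeff_mul, Finset.mul_sum]
      refine Finset.sum_congr rfl fun uw _ => ?_
      rw [hcF, coeff_linear_pow]
    simp_rw [hterm]
    rw [Finset.sum_comm]
    have hinner : ∀ uw ∈ antidiagonal (D + 1),
        (∑ j, c j * (((-(v j)) ^ (D - uw.1) * (D.choose uw.1 : ZMod p)) *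
              (((m + D).choose uw.2 : ZMod p) * (v j) ^ uw.2 * lam ^ (m + D - uw.2))))
        = ((D.choose uw.1 : ZMod p) * (-1 : ZMod p) ^ (D - uw.1) *
            ((m + D).choose uw.2 : ZMod p) * lam ^ (m + D - uw.2)) *
            (if D - uw.1 + uw.2 = 2 * D + 1 then (1 : ZMod p) else 0) := by
      intro uw huw
      have hmem := Finset.HasAntidiagonal.mem_antidiagonal.mp huw
      rw [← hM (D - uw.1 + uw.2) (by omega), Finset.mul_sum]
      refine Finset.sum_congr rfl fun j _ => ?_
      rw [neg_pow, pow_add]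
      ring
    rw [Finset.sum_congr rfl hinner]
    rw [Finset.sum_eq_single_of_mem (0, D + 1)
      (Finset.HasAntidiagonal.mem_antidiagonal.mpr (by omega))]
    · rw [if_pos (by omega)]
      rw [Nat.choose_zero_right, Nat.cast_one, Nat.sub_zero,
        show m + D - (D + 1) = m - 1 by omega]
      ring
    · intro uw huw hne
      have hmem := Finset.HasAntidiagonal.mem_antidiagonal.mp huw
      have hu1 : 1 ≤ uw.1 := by
        rcases Nat.eq_zero_or_pos uw.1 with h0 | h1
        · exfalso; apply hne
          have h2 : uw.2 = D + 1 := by omega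
          exact Prod.ext h0 h2
        · exact h1
      by_cases hud : uw.1 ≤ D
      · rw [if_neg (by omega), mul_zero]
      · rw [Nat.choose_eq_zero_of_lt (by omega), Nat.cast_zero]
        simp
  have hPne : P ≠ 0 := by
    intro h0
    rw [h0, coeff_zero] at hPcoeff
    have h1 : ((m + D).choose (D + 1) : ZMod p) ≠ 0 :=
      cast_choose_ne_zero (by omega) (by omega)
    have h2 : lam ^ (m - 1) ≠ 0 := pow_ne_zero _ hlam
    have h3 : ((-1 : ZMod p)) ^ D ≠ 0 := pow_ne_zero _ (neg_ne_zero.mpr one_ne_zero)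
    exact (mul_ne_zero (mul_ne_zero h3 h1) h2) hPcoeff.symm
  have hdvd : ∀ j0 : Fin n, (X - C (v j0)) ^ D ∣ P := by
    intro j0
    have hbA : v j0 ∈ A := hvmem j0
    have htay : ∀ i, i < D → (taylor (v j0) P).coeff i = 0 := by
      intro i hi
      rw [hP, map_sum]
      have hterm : ∀ j : Fin n,
          taylor (v j0) (C (c j) * ((X - C (v j)) ^ D * (C (v j) * X + C lam) ^ (m + D)))
          = C (c j) * ((X + C (v j0 - v j)) ^ D *
              (C (v j) * X + C (v j * v j0 + lam)) ^ (m + D)) := by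
        intro j
        rw [taylor_apply]
        simp only [mul_comp, pow_comp, sub_comp, add_comp, X_comp, C_comp]
        rw [C_sub, C_add, C_mul]
        ring
      simp_rw [hterm]
      rw [finset_sum_coeff]
      have hterm2 : ∀ j : Fin n,
          (C (c j) * ((X + C (v j0 - v j)) ^ D *
            (C (v j) * X + C (v j * v j0 + lam)) ^ (m + D))).coeff i
          = ∑ uw ∈ antidiagonal i,
              c j * (((v j0 - v j) ^ (D - uw.1) * (D.choose uw.1 : ZMod p)) *
                (((m + D).choose uw.2 : ZMod p) * (v j) ^ uw.2 *
                  (v j * v j0 + lam) ^ (m + D - uw.2))) := by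
        intro j
        rw [coeff_C_mul, coeff_mul, Finset.mul_sum]
        refine Finset.sum_congr rfl fun uw _ => ?_
        rw [coeff_X_add_C_pow, coeff_linear_pow]
      simp_rw [hterm2]
      rw [Finset.sum_comm]
      apply Finset.sum_eq_zero
      intro uw huw
      have hmem := Finset.HasAntidiagonal.mem_antidiagonal.mp huw
      have hu : uw.1 ≤ i := by omega
      have hw : uw.2 ≤ i := by omega
      set Q : Polynomial (ZMod p) :=
        (C (v j0) - X) ^ (D - uw.1) *
          (X ^ uw.2 * (C (v j0) * X + C lam) ^ (D - uw.2)) with hQ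
      have hQdeg : Q.natDegree ≤ 2 * D := by
        rw [hQ]
        apply le_trans natDegree_mul_le
        have h1 : ((C (v j0) - X : Polynomial (ZMod p)) ^ (D - uw.1)).natDegree ≤ D - uw.1 := by
          apply le_trans natDegree_pow_le
          have h0 : (C (v j0) - X : Polynomial (ZMod p)).natDegree ≤ 1 := by
            apply le_trans (natDegree_sub_le _ _)
            exact max_le (by simp [natDegree_C]) natDegree_X_le
          calc (D - uw.1) * (C (v j0) - X : Polynomial (ZMod p)).natDegree
              ≤ (D - uw.1) * 1 := Nat.mul_le_mul_left _ h0
            _ = D - uw.1 := mul_one _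
        have h2 : ((X : Polynomial (ZMod p)) ^ uw.2 *
            (C (v j0) * X + C lam) ^ (D - uw.2)).natDegree ≤ uw.2 + (D - uw.2) := by
          apply le_trans natDegree_mul_le
          have h3 : ((X : Polynomial (ZMod p)) ^ uw.2).natDegree ≤ uw.2 := by
            simp [natDegree_X_pow]
          have h4 : (((C (v j0) * X + C lam) : Polynomial (ZMod p)) ^ (D - uw.2)).natDegree
              ≤ D - uw.2 := by
            apply le_trans natDegree_pow_le
            calc (D - uw.2) * (C (v j0) * X + C lam : Polynomial (ZMod p)).natDegree
                ≤ (D - uw.2) * 1 := Nat.mul_le_mul_left _ (hlin1 (v j0))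
              _ = D - uw.2 := mul_one _
          omega
        omega
      have hQev : ∀ j : Fin n, Q.eval (v j)
          = (v j0 - v j) ^ (D - uw.1) *
              ((v j) ^ uw.2 * (v j * v j0 + lam) ^ (D - uw.2)) := by
        intro j
        rw [hQ]
        simp only [eval_mul, eval_pow, eval_sub, eval_add, eval_C, eval_X]
        rw [mul_comm (v j0) (v j)]
      have hstep : (∑ j, c j * (((v j0 - v j) ^ (D - uw.1) * (D.choose uw.1 : ZMod p)) *
            (((m + D).choose uw.2 : ZMod p) * (v j) ^ uw.2 *
              (v j * v j0 + lam) ^ (m + D - uw.2))))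
          = ∑ j, ((D.choose uw.1 : ZMod p) * ((m + D).choose uw.2 : ZMod p)) *
              (c j * Q.eval (v j)) := by
        refine Finset.sum_congr rfl fun j _ => ?_
        rw [hQev j]
        by_cases hjj : v j = v j0
        · rw [hjj, sub_self, zero_pow (by omega : D - uw.1 ≠ 0)]
          ring
        · have hne : v j ≠ v j0 := hjj
          have hred := hpow (v j) (hvmem j) (v j0) hbA hne (D - uw.2) (by omega)
          rw [show m + D - uw.2 = m + (D - uw.2) by omega, hred]
          ring
      rw [hstep, ← Finset.mul_sum, hkill Q hQdeg, mul_zero]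
    have hsum := sum_taylor_eq P (v j0)
    rw [← hsum, Polynomial.sum_def]
    apply Finset.dvd_sum
    intro i hi
    have hiD : D ≤ i := by
      by_contra hlt
      exact (mem_support_iff.mp hi) (htay i (by omega))
    exact (pow_dvd_pow _ hiD).mul_left _
  have hprod : (∏ j, (X - C (v j)) ^ D) ∣ P :=
    Fintype.prod_dvd_of_coprime
      (fun j1 j2 hne => ((pairwise_coprime_X_sub_C hvinj) hne).pow)
      hdvd
  have hdeg2 : n * D ≤ m + 2 * D := by
    have h1 : (∏ j : Fin n, (X - C (v j)) ^ D).natDegree = n * D := by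
      rw [natDegree_prod _ _ (fun j _ => pow_ne_zero _ (X_sub_C_ne_zero _))]
      simp [natDegree_pow, natDegree_X_sub_C, Finset.sum_const, Finset.card_univ, mul_comm]
    calc n * D = (∏ j : Fin n, (X - C (v j)) ^ D).natDegree := h1.symm
      _ ≤ P.natDegree := natDegree_le_of_dvd hprod hPne
      _ ≤ m + 2 * D := hPdeg
  have e1 : (n - 2) * D + 2 * D = n * D := by
    rw [← Nat.add_mul]
    congr 1
    omega
  have h1 : (n - 2) * D ≤ m := by omega
  have hnat : (n - 3) * (n - 3) ≤ 2 * m := by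
    calc (n - 3) * (n - 3) ≤ (n - 2) * (2 * D) := Nat.mul_le_mul (by omega) hn3
      _ = 2 * ((n - 2) * D) := by ring
      _ ≤ 2 * m := by omega
  have hreal : ((n : ℝ) - 3) ^ 2 ≤ 2 * (m : ℝ) := by
    have hc1 : ((n - 3 : ℕ) : ℝ) = (n : ℝ) - 3 := by
      rw [Nat.cast_sub (by omega : 3 ≤ n)]; norm_num
    calc ((n : ℝ) - 3) ^ 2 = ((n - 3 : ℕ) : ℝ) * ((n - 3 : ℕ) : ℝ) := by
          rw [hc1]; ring
      _ ≤ 2 * (m : ℝ) := by exact_mod_cast hnat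
  have hsq : (n : ℝ) - 3 ≤ Real.sqrt (2 * ((p : ℝ) - 1) / k) := by
    rw [hcast]
    exact Real.le_sqrt_of_sq_le hreal
  linarith
end

section
/- Assume the Paley graph conjecture: for every ε > 0 there exist p₀(ε) and δ(ε) > 0 such that for every prime p > p₀, all subsets A, B ⊆ F_p with |A|, |B| > p^ε, and every nontrivial multiplicative character χ of F_p, one has |Σ_{a∈A, b∈B} χ(a+b)| ≤ p^{−δ}|A||B|. Then for every k ≥ 2 and ε > 0 there is a constant C(ε) such that: for every prime p ≡ 1 (mod k), every λ ∈ F_p*, and all A, B ⊆ F_p with ab + λ ∈ S_k ∪ {0} for all a ∈ A, b ∈ B (where S_k = {x^k : x ∈ F_p*}), one has min(|A|, |B|) ≤ C(ε)·k·p^ε. -/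
/-!
Take a character `χ ≠ 1` of `F_p` with `χ ^ k = 1`; it exists because `k ∣ p - 1`. It is `1` on
`S_k` and vanishes at `0`, so under the hypothesis `χ (a b + λ)` is the indicator of
`a b + λ ≠ 0`. Pigeonholing `A \ {0}` by the value `ω = χ a` yields a class `A_ω` with more than
`p ^ ε` elements, and since `χ (λ / a + b) = ω⁻¹ χ (a b + λ)` on it, the character sum over
`λ / A_ω × B` has modulus at least `|A_ω| (|B| - 1)`. Once `p ^ (-δ) ≤ 1 / 2` this contradicts the
Paley graph bound unless `min (|A|, |B|) ≤ 2 k p ^ ε`; smaller primes are absorbed into the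
constant because `min (|A|, |B|) ≤ p`.
-/

open Finset

section Field

variable {F : Type*} [Field F]

theorem card_le_card_filter_mul_add_ne_zero_add_one [DecidableEq F] {a : F} (ha : a ≠ 0)
    (lam : F) (B : Finset F) : #B ≤ #{b ∈ B | a * b + lam ≠ 0} + 1 := by
  have hzero : #{b ∈ B | ¬(a * b + lam ≠ 0)} ≤ 1 :=
    card_le_one.2 fun b hb b' hb' ↦ by
      simp only [ne_eq, not_not, mem_filter] at hb hb'
      exact mul_left_cancel₀ ha (add_right_cancel (hb.2.trans hb'.2.symm))
  have := card_filter_add_card_filter_not (s := B) (fun b ↦ a * b + lam ≠ 0)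
  omega

theorem injective_const_mul_inv {lam : F} (hlam : lam ≠ 0) :
    Function.Injective fun a : F ↦ lam * a⁻¹ :=
  (mul_right_injective₀ hlam).comp inv_injective

end Field

namespace MulChar

variable {F : Type*} [Field F]

theorem apply_pow_eq_one {R : Type*} [CommMonoidWithZero R] {χ : MulChar F R} {k : ℕ}
    (hχ : χ ^ k = 1) {x : F} (hx : x ≠ 0) : χ (x ^ k) = 1 := by
  rcases eq_or_ne k 0 with rfl | hk
  · simp
  rw [map_pow, ← pow_apply' χ hk, hχ, one_apply hx.isUnit]

theorem apply_eq_ite_of_eq_zero_or_eq_pow {R : Type*} [CommMonoidWithZero R] [Nontrivial R]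
    [DecidableEq F] {χ : MulChar F R} {k : ℕ} (hχ : χ ^ k = 1) {y : F}
    (hy : y = 0 ∨ ∃ x : F, x ≠ 0 ∧ y = x ^ k) : χ y = if y = 0 then 0 else 1 := by
  rcases hy with rfl | ⟨x, hx, rfl⟩
  · simp
  · rw [if_neg (pow_ne_zero k hx), apply_pow_eq_one hχ hx]

theorem exists_ne_one_pow_eq_one [Fintype F] {k : ℕ} (hk : 2 ≤ k)
    (hkF : k ∣ Fintype.card F - 1) : ∃ χ : MulChar F ℂ, χ ≠ 1 ∧ χ ^ k = 1 := by
  obtain ⟨χ, hχ⟩ := exists_mulChar_orderOf F hkF (Complex.isPrimitiveRoot_exp k (by omega))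
  refine ⟨χ, fun h ↦ ?_, hχ ▸ pow_orderOf_eq_one χ⟩
  rw [h, orderOf_one] at hχ
  omega

theorem exists_lt_card_filter_apply_eq [DecidableEq F] {χ : MulChar F ℂ} {k : ℕ} (hk : 0 < k)
    (hχ : χ ^ k = 1) {A : Finset F} {T : ℝ} (hT : 0 ≤ T) (hA : k * T < #(A.erase 0)) :
    ∃ ω : ℂ, ω ^ k = 1 ∧ T < #{a ∈ A.erase 0 | χ a = ω} := by
  have hmaps : ∀ a ∈ A.erase 0, χ a ∈ Polynomial.nthRootsFinset k (1 : ℂ) := fun a ha ↦ by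
    rw [Polynomial.mem_nthRootsFinset hk, ← map_pow χ, apply_pow_eq_one hχ (ne_of_mem_erase ha)]
  have hcard : #(Polynomial.nthRootsFinset k (1 : ℂ)) ≤ k := by
    rw [Polynomial.nthRootsFinset_def]
    exact (Multiset.toFinset_card_le _).trans (Polynomial.card_nthRoots k 1)
  have hlt : #(Polynomial.nthRootsFinset k (1 : ℂ)) • T < #(A.erase 0) := by
    rw [nsmul_eq_mul]
    exact lt_of_le_of_lt (by gcongr) hA
  obtain ⟨ω, hω, hfiber⟩ := exists_lt_card_fiber_of_nsmul_lt_card_of_maps_to hmaps hlt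
  exact ⟨ω, (Polynomial.mem_nthRootsFinset hk 1).1 hω, hfiber⟩

variable [DecidableEq F] {k : ℕ} {χ : MulChar F ℂ} {lam : F}

theorem sum_apply_mul_add_eq_card (hχ : χ ^ k = 1) {a : F} {B : Finset F}
    (hB : ∀ b ∈ B, a * b + lam = 0 ∨ ∃ x : F, x ≠ 0 ∧ a * b + lam = x ^ k) :
    ∑ b ∈ B, χ (a * b + lam) = #{b ∈ B | a * b + lam ≠ 0} := by
  rw [sum_congr rfl fun b hb ↦ apply_eq_ite_of_eq_zero_or_eq_pow hχ (hB b hb), card_filter]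
  push_cast
  exact sum_congr rfl fun b _ ↦ by split_ifs <;> simp_all

theorem card_mul_card_sub_one_le_norm_sum_inv_add (hχ : χ ^ k = 1) (hlam : lam ≠ 0)
    {A B : Finset F} {ω : ℂ} (hω : ‖ω‖ = 1) (hA : ∀ a ∈ A, a ≠ 0 ∧ χ a = ω)
    (hAB : ∀ a ∈ A, ∀ b ∈ B, a * b + lam = 0 ∨ ∃ x : F, x ≠ 0 ∧ a * b + lam = x ^ k) :
    (#A : ℝ) * (#B - 1) ≤ ‖∑ a ∈ A.image (fun a ↦ lam * a⁻¹), ∑ b ∈ B, χ (a + b)‖ := by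
  have hshift : ∀ a ∈ A, ∀ b : F, ω * χ (lam * a⁻¹ + b) = χ (a * b + lam) := fun a ha b ↦ by
    rw [← (hA a ha).2, ← map_mul]
    congr 1
    field_simp [(hA a ha).1]
    ring
  have hsum : ω * ∑ a ∈ A.image (fun a ↦ lam * a⁻¹), ∑ b ∈ B, χ (a + b) =
      ((∑ a ∈ A, #{b ∈ B | a * b + lam ≠ 0} : ℕ) : ℂ) := by
    rw [sum_image (injective_const_mul_inv hlam).injOn, mul_sum, Nat.cast_sum]
    refine sum_congr rfl fun a ha ↦ ?_
    rw [mul_sum, ← sum_apply_mul_add_eq_card hχ (hAB a ha)]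
    exact sum_congr rfl fun b _ ↦ hshift a ha b
  have hnorm : ‖∑ a ∈ A.image (fun a ↦ lam * a⁻¹), ∑ b ∈ B, χ (a + b)‖ =
      ∑ a ∈ A, (#{b ∈ B | a * b + lam ≠ 0} : ℝ) := by
    rw [← one_mul ‖_‖, ← hω, ← norm_mul, hsum, Complex.norm_natCast, Nat.cast_sum]
  rw [hnorm, ← nsmul_eq_mul, ← sum_const]
  gcongr with a ha
  rw [sub_le_iff_le_add]
  exact_mod_cast card_le_card_filter_mul_add_ne_zero_add_one (hA a ha).1 lam B

theorem min_card_le_of_norm_sum_le (hk : 0 < k) (hχ : χ ^ k = 1) {T η : ℝ} (hT : 1 ≤ T)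
    (hη : η ≤ 1 / 2)
    (hbound : ∀ A B : Finset F, T < #A → T < #B →
      ‖∑ a ∈ A, ∑ b ∈ B, χ (a + b)‖ ≤ η * #A * #B)
    (hlam : lam ≠ 0) {A B : Finset F}
    (hAB : ∀ a ∈ A, ∀ b ∈ B, a * b + lam = 0 ∨ ∃ x : F, x ≠ 0 ∧ a * b + lam = x ^ k) :
    min (#A : ℝ) #B ≤ 2 * k * T := by
  by_contra! hbig
  have hA : 2 * k * T < #A := hbig.trans_le (min_le_left _ _)
  have hB : 2 * k * T < #B := hbig.trans_le (min_le_right _ _)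
  have hkT : T ≤ k * T := le_mul_of_one_le_left (by linarith) (by exact_mod_cast hk)
  have hA' : k * T < #(A.erase 0) := by
    have : #A ≤ #(A.erase 0) + 1 := Nat.sub_le_iff_le_add.1 pred_card_le_card_erase
    have : (#A : ℝ) ≤ #(A.erase 0) + 1 := by exact_mod_cast this
    linarith
  obtain ⟨ω, hωk, hfiber⟩ := exists_lt_card_filter_apply_eq hk hχ (by linarith) hA'
  set A₀ := {a ∈ A.erase 0 | χ a = ω}
  have hA₀ : ∀ a ∈ A₀, a ≠ 0 ∧ χ a = ω := fun a ha ↦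
    ⟨ne_of_mem_erase (mem_filter.1 ha).1, (mem_filter.1 ha).2⟩
  have hlow := card_mul_card_sub_one_le_norm_sum_inv_add hχ hlam
    (Complex.norm_eq_one_of_pow_eq_one hωk hk.ne') hA₀
    fun a ha ↦ hAB a (mem_of_mem_erase (mem_filter.1 ha).1)
  have hcard : #(A₀.image fun a ↦ lam * a⁻¹) = #A₀ :=
    card_image_of_injective _ (injective_const_mul_inv hlam)
  have hup := hbound _ B (hcard ▸ hfiber) (by linarith)
  rw [hcard] at hup
  nlinarith [mul_le_mul_of_nonneg_right hη (by positivity : (0 : ℝ) ≤ #A₀ * #B)]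

end MulChar

theorem rpow_neg_le_half {x δ : ℝ} (hδ : 0 < δ) (hx : 2 ^ δ⁻¹ ≤ x) : x ^ (-δ) ≤ 1 / 2 := by
  have hx0 : 0 < x := (by positivity : (0 : ℝ) < 2 ^ δ⁻¹).trans_le hx
  have h2 : 2 ≤ x ^ δ := (Real.rpow_inv_le_iff_of_pos zero_le_two hx0.le hδ).1 hx
  rw [Real.rpow_neg hx0.le, one_div]
  exact inv_anti₀ zero_lt_two h2

/-- Assuming the Paley graph conjecture, for every `k ≥ 2` and `ε > 0` there is a
constant `C` such that for every prime `p ≡ 1 (mod k)`, every `λ ≠ 0` and all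
`A, B ⊆ F_p` with `AB + λ ⊆ S_k ∪ {0}`, we have `min(|A|, |B|) ≤ C·k·p^ε`. -/
theorem stmt7
    (PGC : ∀ ε : ℝ, 0 < ε → ∃ p₀ : ℕ, ∃ δ : ℝ, 0 < δ ∧
      ∀ p : ℕ, p.Prime → p₀ < p →
        ∀ A B : Finset (ZMod p),
          (p : ℝ) ^ ε < (A.card : ℝ) → (p : ℝ) ^ ε < (B.card : ℝ) →
          ∀ χ : MulChar (ZMod p) ℂ, χ ≠ 1 →
            ‖∑ a ∈ A, ∑ b ∈ B, χ (a + b)‖ ≤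
              (p : ℝ) ^ (-δ) * (A.card : ℝ) * (B.card : ℝ)) :
    ∀ k : ℕ, 2 ≤ k → ∀ ε : ℝ, 0 < ε → ∃ C : ℝ, 0 < C ∧
      ∀ p : ℕ, p.Prime → p % k = 1 →
        ∀ lam : ZMod p, lam ≠ 0 →
          ∀ A B : Finset (ZMod p),
            (∀ a ∈ A, ∀ b ∈ B,
              a * b + lam = 0 ∨ ∃ x : ZMod p, x ≠ 0 ∧ a * b + lam = x ^ k) →
            (min A.card B.card : ℝ) ≤ C * (k : ℝ) * (p : ℝ) ^ ε := by
  intro k hk ε hε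
  obtain ⟨p₀, δ, hδ, hPGC⟩ := PGC ε hε
  set P : ℕ := max p₀ ⌈(2 : ℝ) ^ δ⁻¹⌉₊
  refine ⟨P + 2, by positivity, fun p hp hpk lam hlam A B hAB ↦ ?_⟩
  have : Fact p.Prime := ⟨hp⟩
  have hpε : 1 ≤ (p : ℝ) ^ ε := Real.one_le_rpow (by exact_mod_cast hp.one_lt.le) hε.le
  rcases le_or_gt p P with hpP | hPp
  · have hkpε : 1 ≤ (k : ℝ) * p ^ ε :=
      one_le_mul_of_one_le_of_one_le (by exact_mod_cast (by omega : 1 ≤ k)) hpε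
    calc (min #A #B : ℝ) ≤ p :=
          (min_le_left _ _).trans (by exact_mod_cast (card_le_univ A).trans_eq (ZMod.card p))
      _ ≤ P + 2 := by exact_mod_cast (by omega : p ≤ P + 2)
      _ ≤ (P + 2) * (k * p ^ ε) := le_mul_of_one_le_right (by positivity) hkpε
      _ = _ := by ring
  · obtain ⟨χ, hχ1, hχk⟩ := MulChar.exists_ne_one_pow_eq_one hk
      (by rw [ZMod.card p, ← hpk]; exact Nat.dvd_sub_mod p)
    have hpδ : (p : ℝ) ^ (-δ) ≤ 1 / 2 := rpow_neg_le_half hδ <|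
      (Nat.le_ceil _).trans (by exact_mod_cast (le_max_right _ _).trans hPp.le)
    calc (min #A #B : ℝ) ≤ 2 * k * p ^ ε :=
          MulChar.min_card_le_of_norm_sum_le (by omega) hχk hpε hpδ
            (fun A B hA hB ↦ hPGC p hp ((le_max_left _ _).trans_lt hPp) A B hA hB χ hχ1) hlam hAB
      _ ≤ (P + 2) * k * p ^ ε := by gcongr; linarith
end
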